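/- arXiv:2504.15580 — 5 statements merged into one kernel-verified Lean document; each statement's English description precedes it below -/
import Mathlib

section
/- Let G = (V,E,w) be a weighted graph on n ≥ 2 vertices with w(e) ≥ 1 for all e ∈ E, let ε > 0, and let G'' = (V,E,w'') be the random graph with w''(e) = w(e) + 10·log n/ε + X_e for independent X_e ~ Lap(1/ε). Then with probability at least 1 − O(n^{−8}) over the noise the following hold simultaneously: (i) w''(e) ≥ w(e) for every e ∈ E, so that ψ_{G''}(S) ≥ ψ_G(S) for every cut S; and (ii) φ^bal_{G''} ≤ (1 + 20·log n/ε)·φ^bal_G. Consequently, on this event, for every α ≥ 1, every 1/3-balanced cut S with ψ_{G''}(S) ≤ α·φ^bal_{G''} satisfies ψ_G(S) ≤ α·(1 + 20·log n/ε)·φ^bal_G; in particular any O(√(log n))-approximate 1/3-balanced sparsest cut of G'' is an O(log^{1.5} n/ε)-approximate 1/3-balanced sparsest cut of G. -/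
open MeasureTheory Real

namespace DPHC

/-- Binary hierarchical-clustering trees whose leaves are labeled by `V`. -/
inductive HCTree (V : Type) where
  | leaf : V → HCTree V
  | node : HCTree V → HCTree V → HCTree V

namespace HCTree

variable {V : Type}

instance : MeasurableSpace (HCTree V) := ⊤

/-- The list of leaf labels of an HC tree. -/
def leaves : HCTree V → List V
  | leaf v => [v]
  | node l r => leaves l ++ leaves r

/-- The number of leaves of an HC tree. -/
def leafCount : HCTree V → ℕ
  | leaf _ => 1
  | node l r => leafCount l + leafCount r

/-- The depth of an HC tree. -/
def depth : HCTree V → ℕ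
  | leaf _ => 0
  | node l r => max (depth l) (depth r) + 1

/-- `lcaSize T u v` is the number of leaves of the subtree of `T` rooted at the least
common ancestor of the leaves `u` and `v` (that is, `|T[u ∨ v]|`). -/
def lcaSize [DecidableEq V] : HCTree V → V → V → ℕ
  | leaf _, _, _ => 1
  | node l r, u, v =>
    if u ∈ leaves l ∧ v ∈ leaves l then lcaSize l u v
    else if u ∈ leaves r ∧ v ∈ leaves r then lcaSize r u v
    else leafCount l + leafCount r

/-- The set of leaf labels of an HC tree, as a finset. -/
def leafFinset [DecidableEq V] (T : HCTree V) : Finset V := (leaves T).toFinset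

/-- The list of cluster sizes of the internal nodes of an HC tree. -/
def internalSizes : HCTree V → List ℕ
  | leaf _ => []
  | node l r => (leafCount l + leafCount r) :: (internalSizes l ++ internalSizes r)

/-- The list of clusters of the internal nodes of an HC tree. -/
def internalClusters [DecidableEq V] : HCTree V → List (Finset V)
  | leaf _ => []
  | node l r => (leafFinset l ∪ leafFinset r) :: (internalClusters l ++ internalClusters r)

/-- An HC tree is 1/3-balanced if every internal split `H → (S, H∖S)` satisfies
`min(|S|, |H∖S|) ≥ |H|/3`. -/
def IsBalanced : HCTree V → Prop
  | leaf _ => True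
  | node l r =>
      leafCount l + leafCount r ≤ 3 * leafCount l ∧
      leafCount l + leafCount r ≤ 3 * leafCount r ∧
      IsBalanced l ∧ IsBalanced r

/-- `maxCluster t T u` is the maximal cluster of `T` of size at most `t` containing
the leaf `u` (the first cluster of size `≤ t` on the root-to-`u` path). -/
def maxCluster [DecidableEq V] (t : ℕ) : HCTree V → V → Finset V
  | leaf a, _ => {a}
  | node l r, u =>
    if leafCount l + leafCount r ≤ t then leafFinset l ∪ leafFinset r
    else if u ∈ leaves l then maxCluster t l u else maxCluster t r u

/-- A valid HC tree of the vertex set `V`: its leaves are in bijection with `V`. -/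
def IsHCTree (T : HCTree V) : Prop :=
  (leaves T).Nodup ∧ ∀ v : V, v ∈ leaves T

end HCTree

open HCTree

instance (α : Type*) : MeasurableSpace (Finset α) := ⊤

noncomputable section

variable {n : ℕ}

/-- `cutWeight E w S T` is the total weight of the edges of `E` with one endpoint in `S`
and the other in `T`. -/
def cutWeight (E : Finset (Fin n × Fin n)) (w : Fin n × Fin n → ℝ)
    (S T : Finset (Fin n)) : ℝ :=
  ∑ e ∈ E.filter (fun e => (e.1 ∈ S ∧ e.2 ∈ T) ∨ (e.1 ∈ T ∧ e.2 ∈ S)), w e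

/-- The sparsity (edge expansion) `ψ_G(S) = w(S, V∖S)/|S|` of a cut `S`. -/
def sparsity (E : Finset (Fin n × Fin n)) (w : Fin n × Fin n → ℝ)
    (S : Finset (Fin n)) : ℝ :=
  cutWeight E w S (Finset.univ \ S) / S.card

/-- The sparsity of a cut `S ⊆ H` inside the vertex-induced subgraph on `H`. -/
def sparsityIn (E : Finset (Fin n × Fin n)) (w : Fin n × Fin n → ℝ)
    (H S : Finset (Fin n)) : ℝ :=
  cutWeight E w S (H \ S) / S.card

/-- A cut `(S, V∖S)` is 1/3-balanced if `min(|S|, |V∖S|) ≥ n/3`. -/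
def BalancedCut (n : ℕ) (S : Finset (Fin n)) : Prop :=
  n ≤ 3 * S.card ∧ n ≤ 3 * (n - S.card)

/-- `φ^bal_G`: the minimum sparsity over 1/3-balanced cuts with `|S| ≤ n/2`. -/
def phiBal (E : Finset (Fin n × Fin n)) (w : Fin n × Fin n → ℝ) : ℝ :=
  sInf {c | ∃ S : Finset (Fin n), BalancedCut n S ∧ 2 * S.card ≤ n ∧ c = sparsity E w S}

/-- `φ^bal` of the vertex-induced subgraph on `H`. -/
def phiBalIn (E : Finset (Fin n × Fin n)) (w : Fin n × Fin n → ℝ)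
    (H : Finset (Fin n)) : ℝ :=
  sInf {c | ∃ S : Finset (Fin n), S ⊆ H ∧ H.card ≤ 3 * S.card ∧
    H.card ≤ 3 * (H.card - S.card) ∧ 2 * S.card ≤ H.card ∧ c = sparsityIn E w H S}

/-- Dasgupta's hierarchical-clustering cost of the tree `T` on the weighted graph
with edge set `E` and weights `w`. -/
def cost (E : Finset (Fin n × Fin n)) (w : Fin n × Fin n → ℝ)
    (T : HCTree (Fin n)) : ℝ :=
  ∑ e ∈ E, w e * (T.lcaSize e.1 e.2 : ℝ)

/-- The optimal Dasgupta cost over all HC trees of the vertex set. -/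
def OPT (E : Finset (Fin n × Fin n)) (w : Fin n × Fin n → ℝ) : ℝ :=
  sInf {c | ∃ T : HCTree (Fin n), T.IsHCTree ∧ c = cost E w T}

/-- Neighboring weight functions: both nonnegative on the edge set `E`, equal outside
of `E`, and with ℓ₁ distance at most 1 on `E`. -/
def Neighboring (E : Finset (Fin n × Fin n)) (w w' : Fin n × Fin n → ℝ) : Prop :=
  (∀ e ∈ E, 0 ≤ w e) ∧ (∀ e ∈ E, 0 ≤ w' e) ∧ (∀ e ∉ E, w e = w' e) ∧
    ∑ e ∈ E, |w e - w' e| ≤ 1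

/-- `ε`-weight differential privacy of a randomized algorithm (probability kernel)
from weight functions on the fixed topology `E` to a measurable output space. -/
def IsWeightDP {Ω : Type*} [MeasurableSpace Ω] (E : Finset (Fin n × Fin n))
    (A : (Fin n × Fin n → ℝ) → Measure Ω) (ε : ℝ) : Prop :=
  ∀ w w', Neighboring E w w' → ∀ C : Set Ω, MeasurableSet C →
    A w C ≤ ENNReal.ofReal (Real.exp ε) * A w' C

/-- The Laplace distribution with scale `b`, with density `x ↦ (1/(2b))·exp (−|x|/b)`. -/
def Lap (b : ℝ) : Measure ℝ :=
  volume.withDensity fun x => ENNReal.ofReal ((2 * b)⁻¹ * Real.exp (-|x| / b))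

/-- The product of independent `Lap (1/ε)` noises, one for each pair of vertices. -/
def noisePi (n : ℕ) (ε : ℝ) : Measure ((Fin n × Fin n) → ℝ) :=
  Measure.pi fun _ => Lap (1 / ε)

/-- The perturbed weights `w''(e) = w(e) + 10·log₂ n/ε + x e`. -/
def perturb {n : ℕ} (ε : ℝ) (w x : Fin n × Fin n → ℝ) : Fin n × Fin n → ℝ :=
  fun e => w e + 10 * Real.logb 2 n / ε + x e

/-- The simple graph associated with a topology `E`. -/
def topoGraph (E : Finset (Fin n × Fin n)) : SimpleGraph (Fin n) where
  Adj a b := a ≠ b ∧ ((a, b) ∈ E ∨ (b, a) ∈ E)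
  symm := ⟨fun a b h => ⟨Ne.symm h.1, Or.symm h.2⟩⟩
  loopless := ⟨fun a h => h.1 rfl⟩

/-- `F` is the edge set of a collection of `n/5` vertex-disjoint 5-cycles covering
all the vertices. -/
def IsFiveCycles (n : ℕ) (F : Finset (Fin n × Fin n)) : Prop :=
  ∃ σ : Equiv.Perm (Fin n), σ ^ 5 = 1 ∧ (∀ v, σ v ≠ v) ∧
    F = Finset.univ.image fun v => (v, σ v)

/-- The complete-graph topology: each unordered pair appears once, sorted. -/
def completeE (n : ℕ) : Finset (Fin n × Fin n) :=
  Finset.univ.filter fun e => e.1 < e.2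

/-- The weights of the hard instance from the family `d(n,ε)`: weight `W = 1/(20ε)`
on the edges of the 5-cycles `F`, and `n⁻³` on the remaining edges. -/
def hardWeight {n : ℕ} (ε : ℝ) (F : Finset (Fin n × Fin n)) : Fin n × Fin n → ℝ :=
  fun e => if e.1 < e.2 then
    (if e ∈ F ∨ (e.2, e.1) ∈ F then 1 / (20 * ε) else ((n : ℝ) ^ 3)⁻¹) else 0

/-- `B(G, r)`: the collection of HC trees of cost at most `r` on `G`. -/
def ballB (E : Finset (Fin n × Fin n)) (w : Fin n × Fin n → ℝ) (r : ℝ) :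
    Set (HCTree (Fin n)) :=
  {T | T.IsHCTree ∧ cost E w T ≤ r}

/-- The cost footprint `footprint_T^t(u,v)`: equals `w(u,v)` if `u` and `v` lie in two
distinct maximal clusters of `T` of size at most `t`, and `0` otherwise. -/
def footprint (w : Fin n × Fin n → ℝ) (t : ℕ) (T : HCTree (Fin n))
    (u v : Fin n) : ℝ :=
  if T.maxCluster t u ≠ T.maxCluster t v then w (u, v) else 0

/-- The HC tree `T` is obtained by recursively splitting the weighted graph `(E, w)` so
that every internal split is an `α`-approximate 1/3-balanced sparsest cut of the
corresponding vertex-induced subgraph. -/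
def RecApproxSplit (E : Finset (Fin n × Fin n)) (w : Fin n × Fin n → ℝ) (α : ℝ) :
    HCTree (Fin n) → Prop
  | .leaf _ => True
  | .node l r =>
      (l.leafCount + r.leafCount ≤ 3 * l.leafCount) ∧
      (l.leafCount + r.leafCount ≤ 3 * r.leafCount) ∧
      sparsityIn E w (l.leafFinset ∪ r.leafFinset) l.leafFinset ≤
        α * phiBalIn E w (l.leafFinset ∪ r.leafFinset) ∧
      RecApproxSplit E w α l ∧ RecApproxSplit E w α r

end

section Aux

open scoped ENNReal

open Set

variable {n : ℕ}

lemma lap_meas (b : ℝ) :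
    Measurable fun x : ℝ => ENNReal.ofReal ((2 * b)⁻¹ * Real.exp (-|x| / b)) :=
  (measurable_const.mul ((measurable_abs.neg.div_const b).exp)).ennreal_ofReal

lemma lap_Ioi {b : ℝ} (hb : 0 < b) {a : ℝ} (ha : 0 ≤ a) :
    Lap b (Set.Ioi a) = ENNReal.ofReal (Real.exp (-a / b) / 2) := by
  rw [Lap, withDensity_apply _ measurableSet_Ioi]
  have h1 : ∀ᵐ x ∂(volume : Measure ℝ), x ∈ Set.Ioi a →
      ENNReal.ofReal ((2 * b)⁻¹ * Real.exp (-|x| / b))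
        = ENNReal.ofReal ((2 * b)⁻¹ * Real.exp (-x / b)) := by
    refine ae_of_all _ fun x hx => ?_
    rw [abs_of_pos (lt_of_le_of_lt ha hx)]
  rw [setLIntegral_congr_fun_ae measurableSet_Ioi h1]
  have harg : ∀ x : ℝ, -x / b = -(x * b⁻¹) := fun x => by ring
  have hint : IntegrableOn (fun x : ℝ => (2 * b)⁻¹ * Real.exp (-x / b)) (Set.Ioi a) := by
    simp only [harg]
    exact ((exp_neg_integrableOn_Ioi a (inv_pos.mpr hb)).congr_fun
      (fun x _ => by rw [neg_mul, mul_comm]) measurableSet_Ioi).const_mul _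
  rw [← ofReal_integral_eq_lintegral_ofReal hint
    (ae_of_all _ fun x => by positivity)]
  congr 1
  rw [MeasureTheory.integral_const_mul]
  have : (∫ x in Set.Ioi a, Real.exp (-x / b)) = b * Real.exp (-a / b) := by
    have h2 : (∫ x in Set.Ioi a, Real.exp (-x / b))
        = ∫ x in Set.Ioi a, (fun y => Real.exp (-y)) (x * b⁻¹) := by
      refine setIntegral_congr_fun measurableSet_Ioi fun x _ => ?_
      simp only [harg]
    rw [h2, integral_comp_mul_right_Ioi (fun y => Real.exp (-y)) a (inv_pos.mpr hb),
      integral_exp_neg_Ioi]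
    rw [smul_eq_mul, inv_inv]
    congr 2
    ring
  rw [this]
  field_simp

lemma lap_Iio {b : ℝ} (hb : 0 < b) {a : ℝ} (ha : 0 ≤ a) :
    Lap b (Set.Iio (-a)) = ENNReal.ofReal (Real.exp (-a / b) / 2) := by
  rw [← lap_Ioi hb ha, Lap, withDensity_apply _ measurableSet_Iio,
    withDensity_apply _ measurableSet_Ioi]
  set f : ℝ → ℝ≥0∞ := fun x => ENNReal.ofReal ((2 * b)⁻¹ * Real.exp (-|x| / b)) with hf
  have hmeas : Measurable ((Set.Iio (-a)).indicator f) :=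
    (lap_meas b).indicator measurableSet_Iio
  have hmp : MeasurePreserving (fun x : ℝ => -x) volume volume :=
    Measure.measurePreserving_neg _
  rw [← lintegral_indicator measurableSet_Iio _, ← lintegral_indicator measurableSet_Ioi _]
  have key : (fun x : ℝ => (Set.Iio (-a)).indicator f (-x)) = (Set.Ioi a).indicator f := by
    funext x
    simp only [Set.indicator, Set.mem_Iio, Set.mem_Ioi, neg_lt_neg_iff, hf, abs_neg]
  calc ∫⁻ x, (Set.Iio (-a)).indicator f x
      = ∫⁻ x, (Set.Iio (-a)).indicator f (-x) := (hmp.lintegral_comp hmeas).symm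
    _ = ∫⁻ x, (Set.Ioi a).indicator f x := by rw [key]

lemma lap_singleton (b : ℝ) : Lap b {(0:ℝ)} = 0 := by
  rw [Lap, withDensity_apply _ (measurableSet_singleton 0)]
  exact setLIntegral_measure_zero _ _ (Real.volume_singleton)

lemma lap_univ {b : ℝ} (hb : 0 < b) : Lap b Set.univ = 1 := by
  have hIci : Lap b (Set.Ici (0:ℝ)) = Lap b (Set.Ioi 0) := by
    refine le_antisymm ?_ (measure_mono Set.Ioi_subset_Ici_self)
    calc Lap b (Set.Ici (0:ℝ)) = Lap b ({0} ∪ Set.Ioi 0) := by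
          rw [Set.singleton_union, Set.Ioi_insert]
      _ ≤ Lap b {(0:ℝ)} + Lap b (Set.Ioi 0) := measure_union_le _ _
      _ = Lap b (Set.Ioi 0) := by rw [lap_singleton, zero_add]
  have := measure_union (μ := Lap b) (Set.Iio_disjoint_Ici (le_refl (0:ℝ))) measurableSet_Ici
  rw [Set.Iio_union_Ici] at this
  rw [this, hIci]
  have h0 : Lap b (Set.Iio (-(0:ℝ))) = ENNReal.ofReal (Real.exp (-0 / b) / 2) :=
    lap_Iio hb le_rfl
  rw [neg_zero] at h0
  rw [h0, lap_Ioi hb le_rfl]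
  rw [← ENNReal.ofReal_add (by positivity) (by positivity)]
  norm_num

lemma lap_tail {b : ℝ} (hb : 0 < b) {t : ℝ} (ht : 0 ≤ t) :
    Lap b {y : ℝ | t < |y|} ≤ ENNReal.ofReal (Real.exp (-t / b)) := by
  have hset : {y : ℝ | t < |y|} = Set.Iio (-t) ∪ Set.Ioi t := by
    ext y
    simp only [Set.mem_setOf_eq, Set.mem_union, Set.mem_Iio, Set.mem_Ioi, lt_abs, lt_neg]
    tauto
  calc Lap b {y : ℝ | t < |y|} ≤ Lap b (Set.Iio (-t)) + Lap b (Set.Ioi t) := by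
        rw [hset]; exact measure_union_le _ _
    _ = ENNReal.ofReal (Real.exp (-t / b)) := by
        rw [lap_Iio hb ht, lap_Ioi hb ht,
          ← ENNReal.ofReal_add (by positivity) (by positivity)]
        norm_num

lemma pi_tail_bound {ι : Type*} [Fintype ι] [DecidableEq ι] {b t : ℝ}
    (hb : 0 < b) (ht : 0 ≤ t) :
    1 - (Fintype.card ι : ENNReal) * ENNReal.ofReal (Real.exp (-t / b)) ≤
      Measure.pi (fun _ : ι => Lap b) {x | ∀ i, |x i| ≤ t} := by
  haveI : IsProbabilityMeasure (Lap b) := ⟨lap_univ hb⟩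
  set μ := Measure.pi (fun _ : ι => Lap b) with hμ
  haveI : IsProbabilityMeasure μ := by rw [hμ]; infer_instance
  set s : Set ℝ := {y : ℝ | |y| ≤ t} with hs
  set A : Set (ι → ℝ) := Set.pi Set.univ (fun _ => s) with hA
  have hAeq : {x : ι → ℝ | ∀ i, |x i| ≤ t} = A := by
    ext x; simp [hA, Set.mem_pi, hs]
  have hcompl : Aᶜ ⊆ ⋃ i : ι, Function.eval i ⁻¹' sᶜ := by
    intro x hx
    simp only [hA, Set.mem_compl_iff, Set.mem_pi, Set.mem_univ, forall_true_left,
      not_forall] at hx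
    obtain ⟨i, hi⟩ := hx
    exact Set.mem_iUnion.mpr ⟨i, hi⟩
  have hone : ∀ i : ι, μ (Function.eval i ⁻¹' sᶜ) = Lap b sᶜ := by
    intro i
    rw [hμ, ← Set.univ_pi_update_univ, Measure.pi_pi]
    rw [Finset.prod_eq_single i (fun j _ hj => by
      rw [Function.update_of_ne hj]; exact lap_univ hb) (by simp)]
    rw [Function.update_self]
  have htail : Lap b sᶜ ≤ ENNReal.ofReal (Real.exp (-t / b)) := by
    have h : sᶜ = {y : ℝ | t < |y|} := by ext y; simp [hs, not_le]
    rw [h]; exact lap_tail hb ht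
  have hAc : μ Aᶜ ≤ (Fintype.card ι : ENNReal) * ENNReal.ofReal (Real.exp (-t / b)) := by
    calc μ Aᶜ ≤ μ (⋃ i : ι, Function.eval i ⁻¹' sᶜ) := measure_mono hcompl
      _ ≤ ∑' i : ι, μ (Function.eval i ⁻¹' sᶜ) := measure_iUnion_le _
      _ = ∑' _ : ι, Lap b sᶜ := by simp_rw [hone]
      _ = (Fintype.card ι : ENNReal) * Lap b sᶜ := by
          rw [tsum_fintype, Finset.sum_const, Finset.card_univ, nsmul_eq_mul]
      _ ≤ _ := mul_le_mul_right htail _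
  rw [hAeq, tsub_le_iff_right]
  calc (1 : ENNReal) = μ Set.univ := (measure_univ).symm
    _ = μ (A ∪ Aᶜ) := by rw [Set.union_compl_self]
    _ ≤ μ A + μ Aᶜ := measure_union_le _ _
    _ ≤ μ A + (Fintype.card ι : ENNReal) * ENNReal.ofReal (Real.exp (-t / b)) :=
        add_le_add_right hAc _

end Aux

section Det

lemma div_le_div_same' {a b c : ℝ} (h : a ≤ b) (hc : 0 ≤ c) : a / c ≤ b / c := by
  rcases hc.eq_or_lt with rfl | h0
  · simp
  · exact (div_le_div_iff_of_pos_right h0).mpr h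

lemma one_le_logb_of_two_le {n : ℕ} (hn : 2 ≤ n) : 1 ≤ Real.logb 2 n := by
  have h2 : (2:ℝ) ≤ (n:ℝ) := by exact_mod_cast hn
  calc (1:ℝ) = Real.logb 2 2 := (Real.logb_self_eq_one (by norm_num)).symm
    _ ≤ Real.logb 2 n := Real.logb_le_logb_of_le (by norm_num) (by norm_num) h2

lemma event_holds {n : ℕ} (hn : 2 ≤ n) {ε : ℝ} (hε : 0 < ε)
    (E : Finset (Fin n × Fin n)) (w : Fin n × Fin n → ℝ) (hw : ∀ e ∈ E, 1 ≤ w e)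
    (x : Fin n × Fin n → ℝ) (hx : ∀ e, |x e| ≤ 10 * Real.logb 2 n / ε) :
    (∀ e ∈ E, w e ≤ perturb ε w x e) ∧
    (∀ S : Finset (Fin n), sparsity E w S ≤ sparsity E (perturb ε w x) S) ∧
    phiBal E (perturb ε w x) ≤ (1 + 20 * Real.logb 2 n / ε) * phiBal E w ∧
    (∀ α : ℝ, 1 ≤ α → ∀ S : Finset (Fin n), BalancedCut n S →
      sparsity E (perturb ε w x) S ≤ α * phiBal E (perturb ε w x) →
      sparsity E w S ≤ α * (1 + 20 * Real.logb 2 n / ε) * phiBal E w) ∧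
    (∀ β : ℝ, 1 ≤ β → ∀ S : Finset (Fin n), BalancedCut n S →
      sparsity E (perturb ε w x) S ≤
        β * Real.sqrt (Real.logb 2 n) * phiBal E (perturb ε w x) →
      sparsity E w S ≤
        β * Real.sqrt (Real.logb 2 n) * (1 + 20 * Real.logb 2 n / ε) * phiBal E w) := by
  have hL : 1 ≤ Real.logb 2 n := one_le_logb_of_two_le hn
  have hL0 : 0 ≤ Real.logb 2 n := by linarith
  have hT0 : 0 ≤ 10 * Real.logb 2 n / ε := by positivity
  have hC0 : (0:ℝ) < 1 + 20 * Real.logb 2 n / ε := by positivity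
  have hlow : ∀ e, w e ≤ perturb ε w x e := by
    intro e
    have h1 := (abs_le.1 (hx e)).1
    simp only [perturb]
    linarith
  have hup : ∀ e ∈ E, perturb ε w x e ≤ (1 + 20 * Real.logb 2 n / ε) * w e := by
    intro e he
    have h1 := (abs_le.1 (hx e)).2
    have h2 := hw e he
    have hA : 0 ≤ Real.logb 2 n / ε := by positivity
    have h3 : 20 * (Real.logb 2 n / ε) * 1 ≤ 20 * (Real.logb 2 n / ε) * w e := by nlinarith
    have e1 : 10 * Real.logb 2 n / ε = 10 * (Real.logb 2 n / ε) := by ring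
    have e2 : (1 + 20 * Real.logb 2 n / ε) * w e
        = w e + 20 * (Real.logb 2 n / ε) * w e := by ring
    simp only [perturb]
    rw [e2]
    rw [e1] at h1 ⊢
    linarith
  have hcut_mono : ∀ S T : Finset (Fin n),
      cutWeight E w S T ≤ cutWeight E (perturb ε w x) S T := fun S T =>
    Finset.sum_le_sum fun e _ => hlow e
  have hcut_up : ∀ S T : Finset (Fin n),
      cutWeight E (perturb ε w x) S T ≤ (1 + 20 * Real.logb 2 n / ε) * cutWeight E w S T := by
    intro S T
    rw [cutWeight, cutWeight, Finset.mul_sum]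
    exact Finset.sum_le_sum fun e he => hup e (Finset.mem_filter.1 he).1
  have hcut_nonneg : ∀ S T : Finset (Fin n), 0 ≤ cutWeight E w S T := fun S T =>
    Finset.sum_nonneg fun e he =>
      le_trans zero_le_one (hw e (Finset.mem_filter.1 he).1)
  have hsp_mono : ∀ S : Finset (Fin n),
      sparsity E w S ≤ sparsity E (perturb ε w x) S := by
    intro S
    exact div_le_div_same' (hcut_mono _ _) (Nat.cast_nonneg _)
  have hsp_nonneg : ∀ S : Finset (Fin n), 0 ≤ sparsity E w S := fun S =>
    div_nonneg (hcut_nonneg _ _) (Nat.cast_nonneg _)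
  have hsp''_nonneg : ∀ S : Finset (Fin n), 0 ≤ sparsity E (perturb ε w x) S := fun S =>
    le_trans (hsp_nonneg S) (hsp_mono S)
  have hsp_up : ∀ S : Finset (Fin n),
      sparsity E (perturb ε w x) S ≤ (1 + 20 * Real.logb 2 n / ε) * sparsity E w S := by
    intro S
    rw [sparsity, sparsity, ← mul_div_assoc]
    exact div_le_div_same' (hcut_up _ _) (Nat.cast_nonneg _)
  have hphi : phiBal E (perturb ε w x) ≤ (1 + 20 * Real.logb 2 n / ε) * phiBal E w := by
    rcases Set.eq_empty_or_nonempty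
        {c | ∃ S : Finset (Fin n), BalancedCut n S ∧ 2 * S.card ≤ n ∧ c = sparsity E w S} with
      hemp | hne
    · have hemp'' : {c | ∃ S : Finset (Fin n), BalancedCut n S ∧ 2 * S.card ≤ n ∧
          c = sparsity E (perturb ε w x) S} = ∅ := by
        rw [Set.eq_empty_iff_forall_notMem] at hemp ⊢
        rintro z ⟨S, h1, h2, rfl⟩
        exact hemp _ ⟨S, h1, h2, rfl⟩
      rw [phiBal, phiBal, hemp, hemp'', Real.sInf_empty]
      simp
    · obtain ⟨y, S₀, hS₀b, hS₀c, hy⟩ := hne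
      have hbdd'' : BddBelow {c | ∃ S : Finset (Fin n), BalancedCut n S ∧ 2 * S.card ≤ n ∧
          c = sparsity E (perturb ε w x) S} := by
        refine ⟨0, ?_⟩
        rintro z ⟨S, _, _, rfl⟩
        exact hsp''_nonneg S
      have key : ∀ S : Finset (Fin n), BalancedCut n S → 2 * S.card ≤ n →
          phiBal E (perturb ε w x) ≤ (1 + 20 * Real.logb 2 n / ε) * sparsity E w S := by
        intro S h1 h2
        exact le_trans (csInf_le hbdd'' ⟨S, h1, h2, rfl⟩) (hsp_up S)
      have hdiv : phiBal E (perturb ε w x) / (1 + 20 * Real.logb 2 n / ε) ≤ phiBal E w := by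
        refine le_csInf ⟨y, S₀, hS₀b, hS₀c, hy⟩ ?_
        rintro z ⟨S, h1, h2, rfl⟩
        rw [div_le_iff₀ hC0]
        calc phiBal E (perturb ε w x)
            ≤ (1 + 20 * Real.logb 2 n / ε) * sparsity E w S := key S h1 h2
          _ = sparsity E w S * (1 + 20 * Real.logb 2 n / ε) := mul_comm _ _
      calc phiBal E (perturb ε w x)
          = phiBal E (perturb ε w x) / (1 + 20 * Real.logb 2 n / ε) *
              (1 + 20 * Real.logb 2 n / ε) := by field_simp
        _ ≤ phiBal E w * (1 + 20 * Real.logb 2 n / ε) :=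
            mul_le_mul_of_nonneg_right hdiv hC0.le
        _ = (1 + 20 * Real.logb 2 n / ε) * phiBal E w := mul_comm _ _
  refine ⟨fun e _ => hlow e, hsp_mono, hphi, ?_, ?_⟩
  · intro α hα S _ hle
    calc sparsity E w S ≤ sparsity E (perturb ε w x) S := hsp_mono S
      _ ≤ α * phiBal E (perturb ε w x) := hle
      _ ≤ α * ((1 + 20 * Real.logb 2 n / ε) * phiBal E w) :=
          mul_le_mul_of_nonneg_left hphi (by linarith)
      _ = α * (1 + 20 * Real.logb 2 n / ε) * phiBal E w := (mul_assoc _ _ _).symm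
  · intro β hβ S _ hle
    have hγ : 0 ≤ β * Real.sqrt (Real.logb 2 n) :=
      mul_nonneg (by linarith) (Real.sqrt_nonneg _)
    calc sparsity E w S ≤ sparsity E (perturb ε w x) S := hsp_mono S
      _ ≤ β * Real.sqrt (Real.logb 2 n) * phiBal E (perturb ε w x) := hle
      _ ≤ β * Real.sqrt (Real.logb 2 n) * ((1 + 20 * Real.logb 2 n / ε) * phiBal E w) :=
          mul_le_mul_of_nonneg_left hphi hγ
      _ = β * Real.sqrt (Real.logb 2 n) * (1 + 20 * Real.logb 2 n / ε) * phiBal E w :=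
          (mul_assoc _ _ _).symm

end Det

/-- With probability `1 − O(n⁻⁸)` over the Laplace noise, the perturbed
graph `G''` dominates `G` edgewise (hence cutwise), its balanced sparsity blows up by at
most a `(1 + 20 log n/ε)` factor, and consequently any `α`-approximate 1/3-balanced
sparsest cut of `G''` is an `α·(1 + 20 log n/ε)`-approximate one for `G`; in particular
any `O(√(log n))`-approximate cut of `G''` is an `O(log^{1.5} n/ε)`-approximate cut of
`G`. -/
theorem statement_2 :
    ∃ K : ℝ, 0 < K ∧
      ∀ n : ℕ, 2 ≤ n → ∀ ε : ℝ, 0 < ε →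
      ∀ (E : Finset (Fin n × Fin n)) (w : Fin n × Fin n → ℝ),
        (∀ e ∈ E, 1 ≤ w e) →
        ENNReal.ofReal (1 - K * (n : ℝ) ^ (-8 : ℝ)) ≤
          noisePi n ε {x |
            (∀ e ∈ E, w e ≤ perturb ε w x e) ∧
            (∀ S : Finset (Fin n), sparsity E w S ≤ sparsity E (perturb ε w x) S) ∧
            phiBal E (perturb ε w x) ≤ (1 + 20 * Real.logb 2 n / ε) * phiBal E w ∧
            (∀ α : ℝ, 1 ≤ α → ∀ S : Finset (Fin n), BalancedCut n S →
              sparsity E (perturb ε w x) S ≤ α * phiBal E (perturb ε w x) →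
              sparsity E w S ≤ α * (1 + 20 * Real.logb 2 n / ε) * phiBal E w) ∧
            (∀ β : ℝ, 1 ≤ β → ∀ S : Finset (Fin n), BalancedCut n S →
              sparsity E (perturb ε w x) S ≤
                β * Real.sqrt (Real.logb 2 n) * phiBal E (perturb ε w x) →
              sparsity E w S ≤
                β * Real.sqrt (Real.logb 2 n) * (1 + 20 * Real.logb 2 n / ε) *
                  phiBal E w)} := by
  refine ⟨1, one_pos, ?_⟩
  intro n hn ε hε E w hw
  have hε' : (0:ℝ) < 1 / ε := by positivity
  have hL : 1 ≤ Real.logb 2 n := one_le_logb_of_two_le hn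
  have hL0 : 0 ≤ Real.logb 2 n := by linarith
  have ht : 0 ≤ 10 * Real.logb 2 n / ε := by positivity
  have hn0 : (0:ℝ) < (n:ℝ) := by positivity
  have hn1 : (1:ℝ) ≤ (n:ℝ) := by exact_mod_cast Nat.one_le_of_lt hn
  have hsub : {x : Fin n × Fin n → ℝ | ∀ e, |x e| ≤ 10 * Real.logb 2 n / ε} ⊆
      {x : Fin n × Fin n → ℝ |
        (∀ e ∈ E, w e ≤ perturb ε w x e) ∧
        (∀ S : Finset (Fin n), sparsity E w S ≤ sparsity E (perturb ε w x) S) ∧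
        phiBal E (perturb ε w x) ≤ (1 + 20 * Real.logb 2 n / ε) * phiBal E w ∧
        (∀ α : ℝ, 1 ≤ α → ∀ S : Finset (Fin n), BalancedCut n S →
          sparsity E (perturb ε w x) S ≤ α * phiBal E (perturb ε w x) →
          sparsity E w S ≤ α * (1 + 20 * Real.logb 2 n / ε) * phiBal E w) ∧
        (∀ β : ℝ, 1 ≤ β → ∀ S : Finset (Fin n), BalancedCut n S →
          sparsity E (perturb ε w x) S ≤
            β * Real.sqrt (Real.logb 2 n) * phiBal E (perturb ε w x) →
          sparsity E w S ≤
            β * Real.sqrt (Real.logb 2 n) * (1 + 20 * Real.logb 2 n / ε) *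
              phiBal E w)} :=
    fun x hx => event_holds hn hε E w hw x hx
  have hbound := pi_tail_bound (ι := Fin n × Fin n) (b := 1/ε)
    (t := 10 * Real.logb 2 n / ε) hε' ht
  have hexp : -(10 * Real.logb 2 n / ε) / (1/ε) = -(10 * Real.logb 2 n) := by
    field_simp
  rw [hexp] at hbound
  have hlog2 : Real.log 2 ≤ 1 := by
    have := Real.log_two_lt_d9
    linarith
  have hlogn0 : 0 ≤ Real.log (n:ℝ) := Real.log_nonneg hn1
  have hlogn : Real.log (n:ℝ) ≤ Real.logb 2 n := by
    rw [Real.logb, le_div_iff₀ (Real.log_pos (by norm_num))]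
    nlinarith
  have h10 : Real.exp (-(10 * Real.logb 2 n)) ≤ (n:ℝ) ^ (-10 : ℝ) := by
    rw [Real.rpow_def_of_pos hn0]
    apply Real.exp_le_exp.mpr
    nlinarith
  have hpow : (n:ℝ) * (n:ℝ) * (n:ℝ) ^ (-10:ℝ) = (n:ℝ) ^ (-8:ℝ) := by
    have h2 : (n:ℝ) ^ (2:ℝ) = (n:ℝ) * (n:ℝ) := by
      rw [show (2:ℝ) = ((2:ℕ):ℝ) by norm_num, Real.rpow_natCast]
      ring
    rw [← h2, ← Real.rpow_add hn0]
    norm_num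
  have hprod : (Fintype.card (Fin n × Fin n) : ENNReal) *
      ENNReal.ofReal (Real.exp (-(10 * Real.logb 2 n))) ≤
      ENNReal.ofReal ((n:ℝ) ^ (-8:ℝ)) := by
    have hcard : (Fintype.card (Fin n × Fin n) : ENNReal)
        = ENNReal.ofReal ((n:ℝ) * (n:ℝ)) := by
      rw [Fintype.card_prod, Fintype.card_fin]
      rw [← ENNReal.ofReal_natCast (n*n)]
      push_cast
      ring_nf
    rw [hcard, ← ENNReal.ofReal_mul (by positivity)]
    apply ENNReal.ofReal_le_ofReal
    calc (n:ℝ) * (n:ℝ) * Real.exp (-(10 * Real.logb 2 n))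
        ≤ (n:ℝ) * (n:ℝ) * ((n:ℝ) ^ (-10:ℝ)) :=
          mul_le_mul_of_nonneg_left h10 (by positivity)
      _ = (n:ℝ) ^ (-8:ℝ) := hpow
  have hA : ENNReal.ofReal (1 - 1 * (n:ℝ) ^ (-8:ℝ)) ≤
      1 - (Fintype.card (Fin n × Fin n) : ENNReal) *
        ENNReal.ofReal (Real.exp (-(10 * Real.logb 2 n))) := by
    rw [one_mul, ENNReal.ofReal_sub _ (by positivity), ENNReal.ofReal_one]
    exact tsub_le_tsub_left hprod 1
  rw [noisePi]
  exact le_trans hA (le_trans hbound (measure_mono hsub))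

end DPHC
end

section
/- Fix ε ∈ (0,1/20), n divisible by 5 with n ≥ 5, and W = 1/(20ε), and let G be any instance from the hard family d(n,ε). Then the optimal Dasgupta cost satisfies OPT_G ≤ (19n/5)·W + 1/2 ≤ n/ε. -/
open MeasureTheory Real

namespace DPHC

open HCTree

/- ### Auxiliary machinery for the proof of Statement 5 -/

section Aux
open HCTree
variable {V : Type} [DecidableEq V]

/-- A right-leaning spine combining a nonempty list of trees. -/
def spine1 : HCTree V → List (HCTree V) → HCTree V
  | t, [] => t
  | t, s :: ss => .node t (spine1 s ss)

omit [DecidableEq V] in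
lemma leaves_spine1 (t : HCTree V) (ss : List (HCTree V)) :
    (spine1 t ss).leaves = t.leaves ++ (ss.map leaves).flatten := by
  induction ss generalizing t with
  | nil => simp [spine1]
  | cons s ss ih => simp [spine1, leaves, ih]

omit [DecidableEq V] in
lemma mem_leaves_spine1 {t s : HCTree V} {ss : List (HCTree V)} (hs : s = t ∨ s ∈ ss)
    {u : V} (hu : u ∈ s.leaves) : u ∈ (spine1 t ss).leaves := by
  rw [leaves_spine1]
  rcases hs with rfl | hs
  · exact List.mem_append_left _ hu
  · exact List.mem_append_right _
      (List.mem_flatten.2 ⟨s.leaves, List.mem_map_of_mem hs, hu⟩)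

lemma lca_spine1 {s : HCTree V} {u v : V}
    (hu : u ∈ s.leaves) (hv : v ∈ s.leaves) :
    ∀ {t : HCTree V} {ss : List (HCTree V)},
    (spine1 t ss).leaves.Nodup → (s = t ∨ s ∈ ss) →
    (spine1 t ss).lcaSize u v = s.lcaSize u v := by
  intro t ss
  induction ss generalizing t with
  | nil =>
    intro _ hs
    rcases hs with rfl | h
    · rfl
    · cases h
  | cons s' ss ih =>
    intro hnd hs
    have hform : spine1 t (s' :: ss) = .node t (spine1 s' ss) := rfl
    rw [hform] at hnd ⊢
    have hnd' := hnd
    rw [show (HCTree.node t (spine1 s' ss)).leaves = t.leaves ++ (spine1 s' ss).leaves from rfl,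
      List.nodup_append] at hnd'
    rcases hs with rfl | hs
    · show lcaSize _ u v = _
      rw [lcaSize, if_pos ⟨hu, hv⟩]
    · have hs' : s = s' ∨ s ∈ ss := List.mem_cons.1 hs
      have hu' : u ∈ (spine1 s' ss).leaves := mem_leaves_spine1 hs' hu
      have hv' : v ∈ (spine1 s' ss).leaves := mem_leaves_spine1 hs' hv
      have hnotl : u ∉ t.leaves := fun h => hnd'.2.2 u h u hu' rfl
      show lcaSize _ u v = _
      rw [lcaSize, if_neg (fun hc => hnotl hc.1), if_pos ⟨hu', hv'⟩]
      exact ih hnd'.2.1 hs'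

omit [DecidableEq V] in
lemma leafCount_eq_length (T : HCTree V) : T.leafCount = T.leaves.length := by
  induction T with
  | leaf v => rfl
  | node l r ihl ihr => simp [leafCount, leaves, ihl, ihr]

lemma lca_le_leafCount (T : HCTree V) (u v : V) : T.lcaSize u v ≤ T.leafCount := by
  induction T with
  | leaf _ => simp [lcaSize, leafCount]
  | node l r ihl ihr =>
    rw [lcaSize, leafCount]
    split_ifs with h1 h2
    · omega
    · omega
    · omega

lemma lca_symm (T : HCTree V) (u v : V) : T.lcaSize u v = T.lcaSize v u := by
  induction T with
  | leaf _ => rfl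
  | node l r ihl ihr =>
    have e1 : (u ∈ leaves l ∧ v ∈ leaves l) = (v ∈ leaves l ∧ u ∈ leaves l) := propext and_comm
    have e2 : (u ∈ leaves r ∧ v ∈ leaves r) = (v ∈ leaves r ∧ u ∈ leaves r) := propext and_comm
    simp only [lcaSize, e1, e2, ihl, ihr]

end Aux

section Cyc
open HCTree
variable {n : ℕ}

lemma perm_pow_ne (σ : Equiv.Perm (Fin n)) (hσ5 : σ ^ 5 = 1) (hσ1 : ∀ v, σ v ≠ v)
    (v : Fin n) {d : ℕ} (h1 : 1 ≤ d) (h5 : d < 5) : (σ ^ d) v ≠ v := by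
  intro h
  have key : ∀ m, (σ ^ (d * m)) v = v := by
    intro m
    induction m with
    | zero => simp
    | succ m ih => rw [Nat.mul_succ, pow_add, Equiv.Perm.mul_apply, h, ih]
  interval_cases d
  · exact hσ1 v (by simpa using key 1)
  · have h6 : σ ^ (2 * 3) = σ := by
      rw [show 2 * 3 = 5 + 1 from rfl, pow_succ, hσ5, one_mul]
    exact hσ1 v (h6 ▸ key 3)
  · have h6 : σ ^ (3 * 2) = σ := by
      rw [show 3 * 2 = 5 + 1 from rfl, pow_succ, hσ5, one_mul]
    exact hσ1 v (h6 ▸ key 2)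
  · have h16 : σ ^ (4 * 4) = σ := by
      rw [show 4 * 4 = 5 * 3 + 1 from rfl, pow_succ, pow_mul, hσ5, one_pow, one_mul]
    exact hσ1 v (h16 ▸ key 4)

lemma perm_pow_ne' (σ : Equiv.Perm (Fin n)) (hσ5 : σ ^ 5 = 1) (hσ1 : ∀ v, σ v ≠ v)
    (v : Fin n) (i j : ℕ) (hij : i < j) (hj : j < 5) : (σ ^ i) v ≠ (σ ^ j) v := by
  intro h
  have hji : j = i + (j - i) := by omega
  rw [hji, pow_add, Equiv.Perm.mul_apply] at h
  exact perm_pow_ne σ hσ5 hσ1 v (by omega) (by omega) ((σ ^ i).injective h).symm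

/-- The caterpillar tree on the 5-cycle of `r`. -/
def cat (σ : Equiv.Perm (Fin n)) (r : Fin n) : HCTree (Fin n) :=
  .node (.node (.leaf r) (.leaf (σ r)))
    (.node (.node (.leaf ((σ ^ 2) r)) (.leaf ((σ ^ 3) r))) (.leaf ((σ ^ 4) r)))

lemma leaves_cat (σ : Equiv.Perm (Fin n)) (r : Fin n) :
    (cat σ r).leaves = [r, σ r, (σ ^ 2) r, (σ ^ 3) r, (σ ^ 4) r] := rfl

lemma lca_cat (σ : Equiv.Perm (Fin n)) (hσ5 : σ ^ 5 = 1) (hσ1 : ∀ v, σ v ≠ v)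
    (r : Fin n) :
    (cat σ r).lcaSize r (σ r) = 2 ∧
    (cat σ r).lcaSize (σ r) ((σ ^ 2) r) = 5 ∧
    (cat σ r).lcaSize ((σ ^ 2) r) ((σ ^ 3) r) = 2 ∧
    (cat σ r).lcaSize ((σ ^ 3) r) ((σ ^ 4) r) = 3 ∧
    (cat σ r).lcaSize ((σ ^ 4) r) r = 5 := by
  have hp := perm_pow_ne' σ hσ5 hσ1 r
  have h01 : r ≠ σ r := by simpa using hp 0 1 (by omega) (by omega)
  have h02 : r ≠ (σ ^ 2) r := by simpa using hp 0 2 (by omega) (by omega)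
  have h03 : r ≠ (σ ^ 3) r := by simpa using hp 0 3 (by omega) (by omega)
  have h04 : r ≠ (σ ^ 4) r := by simpa using hp 0 4 (by omega) (by omega)
  have h12 : σ r ≠ (σ ^ 2) r := by simpa using hp 1 2 (by omega) (by omega)
  have h13 : σ r ≠ (σ ^ 3) r := by simpa using hp 1 3 (by omega) (by omega)
  have h14 : σ r ≠ (σ ^ 4) r := by simpa using hp 1 4 (by omega) (by omega)
  have h23 : (σ ^ 2) r ≠ (σ ^ 3) r := hp 2 3 (by omega) (by omega)
  have h24 : (σ ^ 2) r ≠ (σ ^ 4) r := hp 2 4 (by omega) (by omega)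
  have h34 : (σ ^ 3) r ≠ (σ ^ 4) r := hp 3 4 (by omega) (by omega)
  refine ⟨?_, ?_, ?_, ?_, ?_⟩ <;>
    simp [cat, lcaSize, leaves, leafCount, h01, h02, h03, h04, h12, h13, h14, h23, h24, h34,
      h01.symm, h02.symm, h03.symm, h04.symm, h12.symm, h13.symm, h14.symm, h23.symm,
      h24.symm, h34.symm]

lemma nodup_cat (σ : Equiv.Perm (Fin n)) (hσ5 : σ ^ 5 = 1) (hσ1 : ∀ v, σ v ≠ v)
    (r : Fin n) : (cat σ r).leaves.Nodup := by
  have hp := perm_pow_ne' σ hσ5 hσ1 r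
  have h01 : r ≠ σ r := by simpa using hp 0 1 (by omega) (by omega)
  have h02 : r ≠ (σ ^ 2) r := by simpa using hp 0 2 (by omega) (by omega)
  have h03 : r ≠ (σ ^ 3) r := by simpa using hp 0 3 (by omega) (by omega)
  have h04 : r ≠ (σ ^ 4) r := by simpa using hp 0 4 (by omega) (by omega)
  have h12 : σ r ≠ (σ ^ 2) r := by simpa using hp 1 2 (by omega) (by omega)
  have h13 : σ r ≠ (σ ^ 3) r := by simpa using hp 1 3 (by omega) (by omega)
  have h14 : σ r ≠ (σ ^ 4) r := by simpa using hp 1 4 (by omega) (by omega)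
  have h23 : (σ ^ 2) r ≠ (σ ^ 3) r := hp 2 3 (by omega) (by omega)
  have h24 : (σ ^ 2) r ≠ (σ ^ 4) r := hp 2 4 (by omega) (by omega)
  have h34 : (σ ^ 3) r ≠ (σ ^ 4) r := hp 3 4 (by omega) (by omega)
  simp [leaves_cat, h01, h02, h03, h04, h12, h13, h14, h23, h24, h34]

end Cyc

/-- Every hard instance from the family `d(n,ε)` has optimal Dasgupta
cost at most `(19n/5)·W + 1/2 ≤ n/ε`, where `W = 1/(20ε)`. -/
theorem statement_5 (n : ℕ) (hn : 5 ≤ n) (hn5 : 5 ∣ n) (ε : ℝ) (hε0 : 0 < ε)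
    (hε : ε < 1 / 20) (F : Finset (Fin n × Fin n)) (hF : IsFiveCycles n F) :
    OPT (completeE n) (hardWeight ε F) ≤ (19 * n / 5) * (1 / (20 * ε)) + 1 / 2 ∧
    (19 * n / 5) * (1 / (20 * ε)) + 1 / 2 ≤ n / ε := by
  obtain ⟨σ, hσ5, hσ1, hFeq⟩ := hF
  have hnpos : 0 < n := by omega
  have hW0 : (0:ℝ) ≤ 1 / (20 * ε) := by positivity
  -- the orbit of a vertex under the 5-cycle permutation
  set orb : Fin n → Finset (Fin n) :=
    fun v => (Finset.range 5).image fun k => (σ ^ k) v with horb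
  have pow_mod5 : ∀ m : ℕ, σ ^ m = σ ^ (m % 5) := by
    intro m
    conv_lhs => rw [← Nat.div_add_mod m 5]
    rw [pow_add, pow_mul, hσ5, one_pow, one_mul]
  have h_self : ∀ v, v ∈ orb v := by
    intro v
    exact Finset.mem_image.2 ⟨0, by simp, by simp⟩
  have orb_sub : ∀ v w, w ∈ orb v → orb w ⊆ orb v := by
    intro v w hw u hu
    obtain ⟨j, hj, rfl⟩ := Finset.mem_image.1 hw
    obtain ⟨i, hi, rfl⟩ := Finset.mem_image.1 hu
    have : (σ ^ i) ((σ ^ j) v) = (σ ^ ((i + j) % 5)) v := by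
      rw [← Equiv.Perm.mul_apply, ← pow_add, pow_mod5]
    rw [this]
    exact Finset.mem_image.2 ⟨(i + j) % 5, Finset.mem_range.2 (Nat.mod_lt _ (by norm_num)), rfl⟩
  have mem_orb_symm : ∀ v w, w ∈ orb v → v ∈ orb w := by
    intro v w hw
    obtain ⟨j, hj, rfl⟩ := Finset.mem_image.1 hw
    rw [Finset.mem_range] at hj
    rcases Nat.eq_zero_or_pos j with rfl | hjpos
    · simpa using h_self v
    · have h5 : (σ ^ (5 - j)) ((σ ^ j) v) = v := by
        rw [← Equiv.Perm.mul_apply, ← pow_add, show 5 - j + j = 5 by omega, hσ5]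
        rfl
      exact Finset.mem_image.2 ⟨5 - j, Finset.mem_range.2 (by omega), h5⟩
  have orb_eq : ∀ v w, w ∈ orb v → orb w = orb v := fun v w hw =>
    le_antisymm (orb_sub v w hw) (orb_sub w v (mem_orb_symm v w hw))
  -- the set of orbit representatives (minima of orbits)
  set R : Finset (Fin n) :=
    Finset.univ.filter (fun v => ∀ k ∈ Finset.range 5, v ≤ (σ ^ k) v) with hR
  have h_cover : ∀ v : Fin n, ∃ r ∈ R, v ∈ orb r := by
    intro v
    have hne : (orb v).Nonempty := ⟨v, h_self v⟩
    have hm : (orb v).min' hne ∈ orb v := Finset.min'_mem _ _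
    have horbm : orb ((orb v).min' hne) = orb v := orb_eq v _ hm
    refine ⟨(orb v).min' hne, ?_, ?_⟩
    · rw [hR, Finset.mem_filter]
      refine ⟨Finset.mem_univ _, fun k hk => ?_⟩
      have hmem2 : (σ ^ k) ((orb v).min' hne) ∈ orb ((orb v).min' hne) :=
        Finset.mem_image.2 ⟨k, hk, rfl⟩
      rw [horbm] at hmem2
      exact Finset.min'_le _ _ hmem2
    · rw [horbm]
      exact h_self v
  have h_le_orb : ∀ r ∈ R, ∀ w ∈ orb r, r ≤ w := by
    intro r hr w hw
    obtain ⟨k, hk, rfl⟩ := Finset.mem_image.1 hw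
    exact (Finset.mem_filter.1 hr).2 k hk
  have h_unique : ∀ r ∈ R, ∀ r' ∈ R, ∀ u, u ∈ orb r → u ∈ orb r' → r = r' := by
    intro r hr r' hr' u hu hu'
    have h1 : orb r = orb r' := by
      rw [← orb_eq r u hu, orb_eq r' u hu']
    apply le_antisymm
    · exact h_le_orb r hr r' (h1 ▸ h_self r')
    · exact h_le_orb r' hr' r (h1.symm ▸ h_self r)
  have h_disj : ∀ r ∈ R, ∀ r' ∈ R, r ≠ r' → Disjoint (orb r) (orb r') := by
    intro r hr r' hr' hne
    exact Finset.disjoint_left.2 fun u hu hu' => hne (h_unique r hr r' hr' u hu hu')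
  have h_card_orb : ∀ v, (orb v).card = 5 := by
    intro v
    rw [horb]
    rw [Finset.card_image_of_injOn, Finset.card_range]
    intro i hi j hj hij
    rw [Finset.coe_range, Set.mem_Iio] at hi hj
    by_contra hne
    rcases lt_or_gt_of_ne hne with h | h
    · exact perm_pow_ne' σ hσ5 hσ1 v i j h hj hij
    · exact perm_pow_ne' σ hσ5 hσ1 v j i h hi hij.symm
  have huniv : (Finset.univ : Finset (Fin n)) = R.biUnion orb := by
    ext v
    simp only [Finset.mem_univ, true_iff, Finset.mem_biUnion]
    exact h_cover v
  have h_Rcard : 5 * R.card = n := by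
    have h1 : n = (R.biUnion orb).card := by
      rw [← huniv, Finset.card_univ, Fintype.card_fin]
    rw [Finset.card_biUnion h_disj] at h1
    have h2 : ∑ r ∈ R, (orb r).card = ∑ _r ∈ R, 5 :=
      Finset.sum_congr rfl fun r _ => h_card_orb r
    rw [h2, Finset.sum_const, smul_eq_mul] at h1
    omega
  -- the tree: a spine of caterpillars, one per orbit
  have hRne : R.Nonempty := by
    obtain ⟨r, hr, _⟩ := h_cover ⟨0, hnpos⟩
    exact ⟨r, hr⟩
  obtain ⟨r0, rs, hlist⟩ : ∃ a l, R.toList = a :: l := by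
    rcases hL : R.toList with _ | ⟨a, l⟩
    · exact absurd (Finset.toList_eq_nil.1 hL) hRne.ne_empty
    · exact ⟨a, l, rfl⟩
  set T : HCTree (Fin n) := spine1 (cat σ r0) (rs.map (cat σ)) with hT
  have h_memR_iff : ∀ r, r ∈ R ↔ (r = r0 ∨ r ∈ rs) := by
    intro r
    rw [← Finset.mem_toList, hlist, List.mem_cons]
  have hmemT : ∀ r ∈ R, cat σ r = cat σ r0 ∨ cat σ r ∈ rs.map (cat σ) := by
    intro r hr
    rcases (h_memR_iff r).1 hr with rfl | h
    · exact Or.inl rfl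
    · exact Or.inr (List.mem_map_of_mem h)
  have h_leaves_orb : ∀ r u, u ∈ (cat σ r).leaves ↔ u ∈ orb r := by
    intro r u
    rw [leaves_cat]
    simp only [List.mem_cons, List.mem_singleton, List.not_mem_nil, or_false, horb,
      Finset.mem_image, Finset.mem_range]
    constructor
    · rintro (rfl | rfl | rfl | rfl | rfl)
      · exact ⟨0, by omega, by simp⟩
      · exact ⟨1, by omega, by simp⟩
      · exact ⟨2, by omega, rfl⟩
      · exact ⟨3, by omega, rfl⟩
      · exact ⟨4, by omega, rfl⟩
    · rintro ⟨k, hk, rfl⟩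
      interval_cases k
      · simp
      · simp
      · simp
      · simp
      · simp
  have h_leavesT : T.leaves = ((r0 :: rs).map fun r => (cat σ r).leaves).flatten := by
    rw [hT, leaves_spine1, List.map_map]
    rfl
  have h_nodup : T.leaves.Nodup := by
    rw [h_leavesT, List.nodup_flatten]
    constructor
    · intro l hl
      obtain ⟨r, _, rfl⟩ := List.mem_map.1 hl
      exact nodup_cat σ hσ5 hσ1 r
    · rw [List.pairwise_map]
      have hnd : (r0 :: rs).Pairwise (· ≠ ·) := by
        rw [← hlist]
        exact R.nodup_toList
      refine hnd.imp_of_mem ?_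
      intro a b ha hb hab
      have haR : a ∈ R := (h_memR_iff a).2 (List.mem_cons.1 ha)
      have hbR : b ∈ R := (h_memR_iff b).2 (List.mem_cons.1 hb)
      intro u hu hv
      exact hab (h_unique a haR b hbR u ((h_leaves_orb a u).1 hu) ((h_leaves_orb b u).1 hv))
  have h_complete : ∀ v : Fin n, v ∈ T.leaves := by
    intro v
    obtain ⟨r, hr, hv⟩ := h_cover v
    exact mem_leaves_spine1 (hmemT r hr) ((h_leaves_orb r v).2 hv)
  have hHC : T.IsHCTree := ⟨h_nodup, h_complete⟩
  have h_leafCountT : T.leafCount = n := by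
    rw [leafCount_eq_length]
    have htf : T.leaves.toFinset = Finset.univ := by
      ext v
      simp [h_complete v]
    have := List.toFinset_card_of_nodup h_nodup
    rw [htf, Finset.card_univ, Fintype.card_fin] at this
    omega
  -- lca of the cycle edges within one orbit
  have h_lca17 : ∀ r ∈ R,
      ∑ k ∈ Finset.range 5, T.lcaSize ((σ ^ k) r) ((σ ^ (k + 1)) r) = 17 := by
    intro r hr
    have hdesc : ∀ u v, u ∈ (cat σ r).leaves → v ∈ (cat σ r).leaves →
        T.lcaSize u v = (cat σ r).lcaSize u v := by
      intro u v hu hv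
      rw [hT]
      exact lca_spine1 hu hv (hT ▸ h_nodup) (hmemT r hr)
    obtain ⟨c0, c1, c2, c3, c4⟩ := lca_cat σ hσ5 hσ1 r
    have m0 : r ∈ (cat σ r).leaves := by simp [leaves_cat]
    have m1 : σ r ∈ (cat σ r).leaves := by simp [leaves_cat]
    have m2 : (σ ^ 2) r ∈ (cat σ r).leaves := by simp [leaves_cat]
    have m3 : (σ ^ 3) r ∈ (cat σ r).leaves := by simp [leaves_cat]
    have m4 : (σ ^ 4) r ∈ (cat σ r).leaves := by simp [leaves_cat]
    rw [Finset.sum_range_succ, Finset.sum_range_succ, Finset.sum_range_succ,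
      Finset.sum_range_succ, Finset.sum_range_one]
    simp only [Nat.reduceAdd, pow_zero, pow_one, hσ5, Equiv.Perm.one_apply, Equiv.Perm.coe_one,
      id_eq]
    rw [hdesc r (σ r) m0 m1, hdesc (σ r) ((σ ^ 2) r) m1 m2, hdesc ((σ ^ 2) r) ((σ ^ 3) r) m2 m3,
      hdesc ((σ ^ 3) r) ((σ ^ 4) r) m3 m4, hdesc ((σ ^ 4) r) r m4 m0]
    rw [c0, c1, c2, c3, c4]
  -- splitting the cost into heavy (cycle) and light edges
  classical
  set w : Fin n × Fin n → ℝ := hardWeight ε F with hw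
  set P : Fin n × Fin n → Prop := fun e => e ∈ F ∨ (e.2, e.1) ∈ F with hP
  set f : Fin n → Fin n × Fin n := fun v => if v < σ v then (v, σ v) else (σ v, v) with hf
  have hσne : ∀ v : Fin n, σ v ≠ v := hσ1
  have hsq : ∀ v : Fin n, σ (σ v) ≠ v := by
    intro v h
    refine perm_pow_ne σ hσ5 hσ1 v (d := 2) (by omega) (by omega) ?_
    rw [pow_two, Equiv.Perm.mul_apply]
    exact h
  have hfx_pos : ∀ x : Fin n, x < σ x → f x = (x, σ x) := by
    intro x hx
    simp only [hf]
    rw [if_pos hx]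
  have hfx_neg : ∀ x : Fin n, ¬ x < σ x → f x = (σ x, x) := by
    intro x hx
    simp only [hf]
    rw [if_neg hx]
  have hHvy : (completeE n).filter P = Finset.image f Finset.univ := by
    ext ⟨e1, e2⟩
    simp only [Finset.mem_filter, completeE, Finset.mem_image, Finset.mem_univ, true_and]
    constructor
    · rintro ⟨hlt, hPe⟩
      have hlt' : e1 < e2 := hlt
      rcases hPe with hPF | hPS
      · rw [hFeq] at hPF
        obtain ⟨v, -, hv⟩ := Finset.mem_image.1 hPF
        injection hv with h1 h2
        refine ⟨v, ?_⟩
        have hvlt : v < σ v := by rw [h2, h1]; exact hlt'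
        simp only [hf]
        rw [if_pos hvlt, h2, h1]
      · rw [hFeq] at hPS
        obtain ⟨v, -, hv⟩ := Finset.mem_image.1 hPS
        injection hv with h1 h2
        refine ⟨v, ?_⟩
        have hvnlt : ¬ v < σ v := by rw [h2, h1]; exact not_lt.2 hlt'.le
        simp only [hf]
        rw [if_neg hvnlt, h2, h1]
    · rintro ⟨v, hv⟩
      by_cases hvlt : v < σ v
      · rw [hfx_pos v hvlt] at hv
        injection hv with h1 h2
        subst h1
        subst h2
        refine ⟨hvlt, ?_⟩
        show (v, σ v) ∈ F ∨ (σ v, v) ∈ F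
        exact Or.inl (hFeq ▸ Finset.mem_image.2 ⟨v, Finset.mem_univ _, rfl⟩)
      · have hlt2 : σ v < v := lt_of_le_of_ne (not_lt.1 hvlt) (hσne v)
        rw [hfx_neg v hvlt] at hv
        injection hv with h1 h2
        subst h1
        subst h2
        refine ⟨hlt2, ?_⟩
        show (σ v, v) ∈ F ∨ (v, σ v) ∈ F
        exact Or.inr (hFeq ▸ Finset.mem_image.2 ⟨v, Finset.mem_univ _, rfl⟩)
  have hfinj : ∀ x ∈ (Finset.univ : Finset (Fin n)), ∀ y ∈ Finset.univ, f x = f y → x = y := by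
    intro x _ y _ hxy
    by_cases hx : x < σ x <;> by_cases hy : y < σ y
    · rw [hfx_pos x hx, hfx_pos y hy] at hxy
      injection hxy with h1 h2
    · rw [hfx_pos x hx, hfx_neg y hy] at hxy
      injection hxy with h1 h2
      exact absurd (by rw [← h1]; exact h2 : σ (σ y) = y) (hsq y)
    · rw [hfx_neg x hx, hfx_pos y hy] at hxy
      injection hxy with h1 h2
      exact absurd (by rw [← h2]; exact h1 : σ (σ y) = y) (hsq y)
    · rw [hfx_neg x hx, hfx_neg y hy] at hxy
      injection hxy with h1 h2
  -- heavy edge sum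
  have h_w_heavy : ∀ v : Fin n, w (f v) = 1 / (20 * ε) := by
    intro v
    have hmemF : (v, σ v) ∈ F := hFeq ▸ Finset.mem_image.2 ⟨v, Finset.mem_univ _, rfl⟩
    by_cases hv : v < σ v
    · have hd : hardWeight ε F (v, σ v) = if v < σ v then
          (if (v, σ v) ∈ F ∨ (σ v, v) ∈ F then 1 / (20 * ε) else ((n : ℝ) ^ 3)⁻¹) else 0 := rfl
      rw [hw, hfx_pos v hv, hd, if_pos hv, if_pos (Or.inl hmemF)]
    · have hvlt : σ v < v := lt_of_le_of_ne (not_lt.1 hv) (hσne v)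
      have hd : hardWeight ε F (σ v, v) = if σ v < v then
          (if (σ v, v) ∈ F ∨ (v, σ v) ∈ F then 1 / (20 * ε) else ((n : ℝ) ^ 3)⁻¹) else 0 := rfl
      rw [hw, hfx_neg v hv, hd, if_pos hvlt, if_pos (Or.inr hmemF)]
  have h_lca_f : ∀ v : Fin n, (T.lcaSize (f v).1 (f v).2 : ℝ) = (T.lcaSize v (σ v) : ℝ) := by
    intro v
    by_cases hv : v < σ v
    · rw [hfx_pos v hv]
    · rw [hfx_neg v hv]
      exact congrArg Nat.cast (lca_symm T (σ v) v)
  have h_heavy : ∑ e ∈ (completeE n).filter P, w e * (T.lcaSize e.1 e.2 : ℝ) =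
      (1 / (20 * ε)) * (17 * R.card) := by
    rw [hHvy, Finset.sum_image hfinj]
    have hstep : ∀ v ∈ (Finset.univ : Finset (Fin n)),
        w (f v) * (T.lcaSize (f v).1 (f v).2 : ℝ) =
        (1 / (20 * ε)) * (T.lcaSize v (σ v) : ℝ) := by
      intro v _
      rw [h_w_heavy v, h_lca_f v]
    rw [Finset.sum_congr rfl hstep, ← Finset.mul_sum]
    congr 1
    rw [huniv, Finset.sum_biUnion h_disj]
    have hinner : ∀ r ∈ R, ∑ u ∈ orb r, (T.lcaSize u (σ u) : ℝ) = 17 := by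
      intro r hr
      rw [horb]
      have hinj : ∀ x ∈ Finset.range 5, ∀ y ∈ Finset.range 5,
          (σ ^ x) r = (σ ^ y) r → x = y := by
        intro i hi j hj hij
        rw [Finset.mem_range] at hi hj
        by_contra hne
        rcases lt_or_gt_of_ne hne with h | h
        · exact perm_pow_ne' σ hσ5 hσ1 r i j h hj hij
        · exact perm_pow_ne' σ hσ5 hσ1 r j i h hi hij.symm
      rw [Finset.sum_image hinj]
      have hsucc : ∀ k, σ ((σ ^ k) r) = (σ ^ (k + 1)) r := by
        intro k
        rw [pow_succ', Equiv.Perm.mul_apply]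
      have : ∀ k ∈ Finset.range 5, (T.lcaSize ((σ ^ k) r) (σ ((σ ^ k) r)) : ℝ) =
          (T.lcaSize ((σ ^ k) r) ((σ ^ (k + 1)) r) : ℝ) := by
        intro k _
        rw [hsucc k]
      rw [Finset.sum_congr rfl this, ← Nat.cast_sum, h_lca17 r hr]
      norm_num
    rw [Finset.sum_congr rfl hinner, Finset.sum_const, nsmul_eq_mul]
    ring
  -- light edge sum
  have h_card_cE : 2 * (completeE n).card ≤ n * n := by
    set B : Finset (Fin n × Fin n) :=
      Finset.univ.filter (fun e : Fin n × Fin n => e.2 < e.1) with hB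
    have hBim : B = (completeE n).image (fun e => (e.2, e.1)) := by
      ext ⟨a, b⟩
      simp only [hB, Finset.mem_filter, Finset.mem_univ, true_and, Finset.mem_image, completeE]
      constructor
      · intro h
        exact ⟨(b, a), h, rfl⟩
      · rintro ⟨⟨x1, x2⟩, hx, heq⟩
        injection heq with h1 h2
        subst h1
        subst h2
        exact hx
    have hcard_eq : (completeE n).card = B.card := by
      rw [hBim]
      exact (Finset.card_image_of_injective _
        (fun a b h => Prod.swap_injective h : Function.Injective
          (fun e : Fin n × Fin n => (e.2, e.1)))).symm
    have hdisjAB : Disjoint (completeE n) B := by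
      rw [Finset.disjoint_left]
      intro e he heB
      rw [completeE, Finset.mem_filter] at he
      rw [hB, Finset.mem_filter] at heB
      exact absurd heB.2 (lt_asymm he.2)
    have hun : ((completeE n) ∪ B).card ≤ n * n := by
      calc ((completeE n) ∪ B).card ≤ (Finset.univ : Finset (Fin n × Fin n)).card :=
            Finset.card_le_card (Finset.subset_univ _)
        _ = n * n := by rw [Finset.card_univ]; simp
    rw [Finset.card_union_of_disjoint hdisjAB] at hun
    omega
  have h_light : ∑ e ∈ (completeE n).filter (fun e => ¬ P e), w e * (T.lcaSize e.1 e.2 : ℝ) ≤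
      1 / 2 := by
    have hterm : ∀ e ∈ (completeE n).filter (fun e => ¬ P e),
        w e * (T.lcaSize e.1 e.2 : ℝ) ≤ ((n : ℝ) ^ 3)⁻¹ * n := by
      rintro ⟨e1, e2⟩ he
      rw [Finset.mem_filter] at he
      obtain ⟨hecE, hnP⟩ := he
      rw [completeE, Finset.mem_filter] at hecE
      have hlt : e1 < e2 := hecE.2
      have hnP' : ¬ ((e1, e2) ∈ F ∨ (e2, e1) ∈ F) := hnP
      have hwe : w (e1, e2) = ((n : ℝ) ^ 3)⁻¹ := by
        have hd : hardWeight ε F (e1, e2) = if e1 < e2 then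
            (if (e1, e2) ∈ F ∨ (e2, e1) ∈ F then 1 / (20 * ε) else ((n : ℝ) ^ 3)⁻¹) else 0 := rfl
        rw [hw, hd, if_pos hlt, if_neg hnP']
      rw [hwe]
      apply mul_le_mul_of_nonneg_left _ (by positivity)
      have := lca_le_leafCount T e1 e2
      rw [h_leafCountT] at this
      exact_mod_cast this
    calc ∑ e ∈ (completeE n).filter (fun e => ¬ P e), w e * (T.lcaSize e.1 e.2 : ℝ)
        ≤ ∑ _e ∈ (completeE n).filter (fun e => ¬ P e), ((n : ℝ) ^ 3)⁻¹ * n :=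
          Finset.sum_le_sum hterm
      _ = ((completeE n).filter (fun e => ¬ P e)).card * (((n : ℝ) ^ 3)⁻¹ * n) := by
          rw [Finset.sum_const, nsmul_eq_mul]
      _ ≤ ((n : ℝ) * n / 2) * (((n : ℝ) ^ 3)⁻¹ * n) := by
          apply mul_le_mul_of_nonneg_right _ (by positivity)
          have h1 : ((completeE n).filter (fun e => ¬ P e)).card ≤ (completeE n).card :=
            Finset.card_le_card (Finset.filter_subset _ _)
          have h2 : 2 * ((completeE n).filter (fun e => ¬ P e)).card ≤ n * n := by omega
          have h3 : (2 : ℝ) * ((completeE n).filter (fun e => ¬ P e)).card ≤ (n : ℝ) * n := by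
            exact_mod_cast h2
          linarith
      _ = 1 / 2 := by
          field_simp
  -- combining
  have h_cost : cost (completeE n) w T ≤ (19 * n / 5) * (1 / (20 * ε)) + 1 / 2 := by
    rw [cost, ← Finset.sum_filter_add_sum_filter_not (completeE n) P]
    have hRcast : (R.card : ℝ) = (n : ℝ) / 5 := by
      have : ((5 * R.card : ℕ) : ℝ) = (n : ℝ) := by rw [h_Rcard]
      push_cast at this
      linarith
    have hheavy_le : ∑ e ∈ (completeE n).filter P, w e * (T.lcaSize e.1 e.2 : ℝ) ≤
        (19 * n / 5) * (1 / (20 * ε)) := by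
      rw [h_heavy, hRcast]
      have : (17 : ℝ) * ((n : ℝ) / 5) ≤ 19 * (n : ℝ) / 5 := by
        have : (0 : ℝ) ≤ n := Nat.cast_nonneg n
        linarith
      calc (1 / (20 * ε)) * (17 * ((n : ℝ) / 5)) ≤ (1 / (20 * ε)) * (19 * (n : ℝ) / 5) :=
            mul_le_mul_of_nonneg_left this hW0
        _ = (19 * n / 5) * (1 / (20 * ε)) := by ring
    linarith [h_light]
  have hw_nonneg : ∀ e : Fin n × Fin n, 0 ≤ hardWeight ε F e := by
    intro e
    rw [hardWeight]
    split_ifs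
    · positivity
    · positivity
    · exact le_rfl
  have hbdd : BddBelow {c | ∃ T' : HCTree (Fin n), T'.IsHCTree ∧
      c = cost (completeE n) (hardWeight ε F) T'} := by
    refine ⟨0, ?_⟩
    rintro c ⟨T', -, rfl⟩
    exact Finset.sum_nonneg fun e _ => mul_nonneg (hw_nonneg e) (by positivity)
  have hOPT : OPT (completeE n) (hardWeight ε F) ≤ cost (completeE n) (hardWeight ε F) T :=
    csInf_le hbdd ⟨T, hHC, rfl⟩
  have hconj2 : (19 * n / 5) * (1 / (20 * ε)) + 1 / 2 ≤ (n : ℝ) / ε := by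
    have hn' : (5 : ℝ) ≤ (n : ℝ) := by exact_mod_cast hn
    have hkey : (n : ℝ) / ε - ((19 * n / 5) * (1 / (20 * ε)) + 1 / 2) =
        (81 * (n : ℝ) / 100 - ε / 2) / ε := by
      field_simp
      ring
    have hnum : (0 : ℝ) ≤ 81 * (n : ℝ) / 100 - ε / 2 := by nlinarith
    have := div_nonneg hnum hε0.le
    linarith
  constructor
  · calc OPT (completeE n) (hardWeight ε F) ≤ cost (completeE n) (hardWeight ε F) T := hOPT
      _ ≤ (19 * n / 5) * (1 / (20 * ε)) + 1 / 2 := by rw [← hw]; exact h_cost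
  · exact hconj2


end DPHC
end

section
/- There is an absolute constant c > 0 such that for every ε ∈ (0, 1/20) and every sufficiently large n the following holds: for every ε-weight-DP randomized algorithm A that on every weighted graph on n vertices outputs a 1/3-balanced cut (S, V∖S), there exists a weighted graph G on n vertices with E[ψ_G(S)] > φ^bal_G + c/(ε·log² n); i.e., any ε-weight-DP algorithm for the 1/3-balanced sparsest cut problem has expected additive sparsity error Ω(1/(ε·log² n)) on some instance. -/
open MeasureTheory Real

namespace DPHC

open HCTree

section AuxForStatement7

open Finset

instance (α : Type*) : MeasurableSingletonClass (Finset α) :=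
  ⟨fun _ => MeasurableSpace.measurableSet_top⟩

instance decidableBalancedCut {n : ℕ} : DecidablePred (BalancedCut n) := fun S => by
  unfold BalancedCut; infer_instance

lemma meas_finset_eq_sum {n : ℕ} (μ : Measure (Finset (Fin n))) (F : Finset (Finset (Fin n))) :
    μ F = ∑ x ∈ F, μ {x} := by
  have h : (F : Set (Finset (Fin n))) = ⋃ x ∈ F, ({x} : Set (Finset (Fin n))) := by
    ext y; simp
  rw [h, measure_biUnion_finset]
  · intro x _ y _ hxy; simp [Function.onFun, Set.disjoint_singleton, hxy]
  · intro x _; exact MeasurableSpace.measurableSet_top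

lemma card_perm_preimage {m : ℕ} (B C : Finset (Fin m)) :
    (Finset.univ.filter fun pp : Equiv.Perm (Fin m) =>
      (Finset.univ.filter fun i => pp i ∈ B) = C).card ≤
      Nat.factorial B.card * Nat.factorial (m - B.card) := by
  classical
  set F := (Finset.univ.filter fun pp : Equiv.Perm (Fin m) =>
      (Finset.univ.filter fun i => pp i ∈ B) = C) with hF
  rcases F.eq_empty_or_nonempty with h | ⟨pp₀, hpp₀⟩
  · simp [h]
  · have hmemF : ∀ pp ∈ F, ∀ i : Fin m, pp i ∈ B ↔ i ∈ C := by
      intro pp hpp i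
      have h₀ : (Finset.univ.filter fun i => pp i ∈ B) = C := (mem_filter.1 hpp).2
      rw [← h₀]; simp
    have hmem₀ := hmemF pp₀ hpp₀
    have hCB : C.card = B.card := by
      have : C = B.image pp₀.symm := by
        ext j
        simp only [mem_image]
        constructor
        · intro hj
          exact ⟨pp₀ j, (hmem₀ j).2 hj, pp₀.symm_apply_apply j⟩
        · rintro ⟨b, hb, rfl⟩
          exact (hmem₀ _).1 (by simpa using hb)
      rw [this, Finset.card_image_of_injective _ pp₀.symm.injective]
    -- membership proofs
    have pf0 : ∀ (x : ↥F) (y : ↥((Finset.univ \ C : Finset (Fin m)))),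
        x.1 y.1 ∈ (Finset.univ \ B : Finset (Fin m)) := by
      intro x y
      have hy : y.1 ∉ C := by have := y.2; simp only [mem_sdiff, mem_univ, true_and] at this; exact this
      simp only [Finset.mem_sdiff, Finset.mem_univ, true_and]
      exact fun hb => hy ((hmemF x.1 x.2 y.1).1 hb)
    have pf1 : ∀ x : ↥F, Function.Bijective
        (fun y : ↥(C : Finset (Fin m)) => (⟨x.1 y.1, (hmemF x.1 x.2 y.1).2 y.2⟩ : ↥B)) := by
      intro x
      rw [Fintype.bijective_iff_injective_and_card]
      refine ⟨fun u v huv => Subtype.ext (x.1.injective (Subtype.ext_iff.1 huv)), by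
        simp [Fintype.card_coe, hCB]⟩
    have pf2 : ∀ x : ↥F, Function.Bijective
        (fun y : ↥((Finset.univ \ C : Finset (Fin m))) =>
          (⟨x.1 y.1, pf0 x y⟩ : ↥((Finset.univ \ B : Finset (Fin m))))) := by
      intro x
      rw [Fintype.bijective_iff_injective_and_card]
      refine ⟨fun u v huv => Subtype.ext (x.1.injective (Subtype.ext_iff.1 huv)), by
        simp only [Fintype.card_coe]
        rw [Finset.card_sdiff_of_subset (Finset.subset_univ _), Finset.card_sdiff_of_subset (Finset.subset_univ _), hCB]⟩
    have key : F.card ≤ Fintype.card ((↥(C : Finset (Fin m)) ≃ ↥B) ×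
        (↥((Finset.univ \ C : Finset (Fin m))) ≃ ↥((Finset.univ \ B : Finset (Fin m))))) := by
      rw [← Fintype.card_coe F]
      apply Fintype.card_le_of_injective
        (fun x => (Equiv.ofBijective _ (pf1 x), Equiv.ofBijective _ (pf2 x)))
      rintro x x' hee
      simp only [Prod.mk.injEq] at hee
      apply Subtype.ext
      apply Equiv.ext
      intro i
      by_cases hi : i ∈ C
      · have := congrFun (congrArg (fun (e : ↥(C : Finset (Fin m)) ≃ ↥B) => (e : ↥C → ↥B)) hee.1) ⟨i, hi⟩
        simpa [Equiv.ofBijective] using Subtype.ext_iff.1 this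
      · have hi' : i ∈ Finset.univ \ C := by simp [hi]
        have := congrFun (congrArg
          (fun (e : ↥((Finset.univ \ C : Finset (Fin m))) ≃ ↥((Finset.univ \ B : Finset (Fin m)))) =>
            (e : ↥(Finset.univ \ C) → ↥(Finset.univ \ B))) hee.2) ⟨i, hi'⟩
        simpa [Equiv.ofBijective] using Subtype.ext_iff.1 this
    calc F.card ≤ _ := key
    _ = Nat.factorial B.card * Nat.factorial (m - B.card) := by
      rw [Fintype.card_prod]
      congr 1
      · rw [Fintype.card_equiv (Fintype.equivOfCardEq (by simp [Fintype.card_coe, hCB]))]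
        simp [Fintype.card_coe, hCB]
      · rw [Fintype.card_equiv (Fintype.equivOfCardEq ?_)]
        · simp only [Fintype.card_coe]
          rw [Finset.card_sdiff_of_subset (Finset.subset_univ _), Finset.card_univ, Fintype.card_fin, hCB]
        · simp only [Fintype.card_coe]
          rw [Finset.card_sdiff_of_subset (Finset.subset_univ _), Finset.card_sdiff_of_subset (Finset.subset_univ _), hCB]

lemma card_perm_cross_le {m : ℕ} (hm : 1 ≤ m) (A B : Finset (Fin m)) (m₀ : ℕ) :
    (Finset.univ.filter fun pp : Equiv.Perm (Fin m) =>
      (Finset.univ.filter fun i =>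
        (i ∈ A ∧ pp i ∉ B) ∨ (i ∉ A ∧ pp i ∈ B)).card ≤ m₀).card ≤
      (m₀ + 1) * m ^ m₀ * (Nat.factorial B.card * Nat.factorial (m - B.card)) := by
  classical
  set 𝒟 := (Finset.univ : Finset (Fin m)).powerset.filter (fun D => D.card ≤ m₀) with h𝒟
  have hsub : (Finset.univ.filter fun pp : Equiv.Perm (Fin m) =>
      (Finset.univ.filter fun i =>
        (i ∈ A ∧ pp i ∉ B) ∨ (i ∉ A ∧ pp i ∈ B)).card ≤ m₀) ⊆
      𝒟.biUnion (fun D => Finset.univ.filter fun pp : Equiv.Perm (Fin m) =>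
        (Finset.univ.filter fun i => pp i ∈ B) = symmDiff A D) := by
    intro pp hpp
    rw [mem_filter] at hpp
    set Dpp := (Finset.univ.filter fun i =>
        (i ∈ A ∧ pp i ∉ B) ∨ (i ∉ A ∧ pp i ∈ B)) with hDpp
    have hD : Dpp = symmDiff A (Finset.univ.filter fun i => pp i ∈ B) := by
      ext i
      simp only [hDpp, mem_filter, mem_univ, true_and, Finset.mem_symmDiff]
      tauto
    refine Finset.mem_biUnion.2 ⟨Dpp, ?_, ?_⟩
    · rw [h𝒟, mem_filter, Finset.mem_powerset]
      exact ⟨Finset.subset_univ _, hpp.2⟩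
    · rw [mem_filter]
      refine ⟨mem_univ _, ?_⟩
      rw [hD, symmDiff_symmDiff_cancel_left]
  calc _ ≤ (𝒟.biUnion (fun D => Finset.univ.filter fun pp : Equiv.Perm (Fin m) =>
        (Finset.univ.filter fun i => pp i ∈ B) = symmDiff A D)).card :=
      Finset.card_le_card hsub
  _ ≤ ∑ D ∈ 𝒟, (Finset.univ.filter fun pp : Equiv.Perm (Fin m) =>
        (Finset.univ.filter fun i => pp i ∈ B) = symmDiff A D).card :=
      Finset.card_biUnion_le
  _ ≤ ∑ _D ∈ 𝒟, Nat.factorial B.card * Nat.factorial (m - B.card) :=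
      Finset.sum_le_sum (fun D _ => card_perm_preimage B (symmDiff A D))
  _ = 𝒟.card * (Nat.factorial B.card * Nat.factorial (m - B.card)) := by
      rw [Finset.sum_const, smul_eq_mul]
  _ ≤ (m₀ + 1) * m ^ m₀ * (Nat.factorial B.card * Nat.factorial (m - B.card)) := by
      apply Nat.mul_le_mul_right
      -- card 𝒟 ≤ (m₀+1) * m^m₀
      have hsub2 : 𝒟 ⊆ (Finset.range (m₀ + 1)).biUnion
          (fun k => Finset.powersetCard k (Finset.univ : Finset (Fin m))) := by
        intro D hD
        rw [h𝒟, mem_filter, Finset.mem_powerset] at hD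
        refine Finset.mem_biUnion.2 ⟨D.card, Finset.mem_range.2 (by omega), ?_⟩
        rw [Finset.mem_powersetCard]
        exact ⟨Finset.subset_univ _, rfl⟩
      calc 𝒟.card ≤ _ := Finset.card_le_card hsub2
      _ ≤ ∑ k ∈ Finset.range (m₀ + 1), (Finset.powersetCard k (Finset.univ : Finset (Fin m))).card :=
        Finset.card_biUnion_le
      _ ≤ ∑ _k ∈ Finset.range (m₀ + 1), m ^ m₀ := by
        apply Finset.sum_le_sum
        intro k hk
        rw [Finset.card_powersetCard, Finset.card_univ, Fintype.card_fin]
        calc m.choose k ≤ m ^ k := Nat.choose_le_pow m k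
        _ ≤ m ^ m₀ := Nat.pow_le_pow_right hm (by exact Nat.lt_succ_iff.1 (Finset.mem_range.1 hk))
      _ = (m₀ + 1) * m ^ m₀ := by rw [Finset.sum_const, Finset.card_range, smul_eq_mul]


lemma dp_chain {n : ℕ} (E : Finset (Fin n × Fin n))
    (𝒜 : (Fin n × Fin n → ℝ) → Measure (Finset (Fin n))) {ε : ℝ}
    (hDP : IsWeightDP E 𝒜 ε) :
    ∀ (t : ℕ) (w : Fin n × Fin n → ℝ), (∀ e, 0 ≤ w e) → (∀ e ∉ E, w e = 0) →
      (∑ e ∈ E, |w e|) ≤ t → ∀ C : Set (Finset (Fin n)),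
      𝒜 w C ≤ (ENNReal.ofReal (Real.exp ε)) ^ t * 𝒜 (fun _ => 0) C := by
  intro t
  induction t with
  | zero =>
    intro w hnn h0 ht C
    have hw : w = fun _ => 0 := by
      funext e
      by_cases he : e ∈ E
      · have hz : ∑ e ∈ E, |w e| = 0 :=
          le_antisymm (by simpa using ht) (Finset.sum_nonneg fun e _ => abs_nonneg _)
        have := (Finset.sum_eq_zero_iff_of_nonneg (fun e _ => abs_nonneg (w e))).1 hz e he
        simpa using this
      · exact h0 e he
    rw [hw]; simp
  | succ t ih =>
    intro w hnn h0 ht C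
    have htR : ((t : ℝ) + 1) ≠ 0 := by positivity
    set w' : Fin n × Fin n → ℝ := fun e => ((t : ℝ) / (t + 1)) * w e with hw'
    have hnn' : ∀ e, 0 ≤ w' e := fun e => mul_nonneg (by positivity) (hnn e)
    have h0' : ∀ e ∉ E, w' e = 0 := fun e he => by simp [hw', h0 e he]
    have hsum' : ∑ e ∈ E, |w' e| ≤ (t : ℝ) := by
      have habs : ∀ e, |w' e| = ((t : ℝ) / (t + 1)) * |w e| := by
        intro e
        rw [hw', abs_mul, abs_of_nonneg (by positivity : (0:ℝ) ≤ (t : ℝ) / (t + 1))]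
      calc ∑ e ∈ E, |w' e| = ((t : ℝ) / (t + 1)) * ∑ e ∈ E, |w e| := by
            rw [Finset.mul_sum]; exact Finset.sum_congr rfl fun e _ => habs e
      _ ≤ ((t : ℝ) / (t + 1)) * ((t : ℕ) + 1 : ℕ) := by
            apply mul_le_mul_of_nonneg_left _ (by positivity)
            exact_mod_cast ht
      _ = (t : ℝ) := by
            push_cast
            field_simp
    have hnbr : Neighboring E w w' := by
      refine ⟨fun e _ => hnn e, fun e _ => hnn' e, fun e he => by rw [h0 e he, h0' e he], ?_⟩
      have hdiff : ∀ e, |w e - w' e| = (1 / ((t : ℝ) + 1)) * |w e| := by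
        intro e
        have heq : w e - w' e = (1 / ((t : ℝ) + 1)) * w e := by
          rw [hw']; field_simp; ring
        rw [heq, abs_mul, abs_of_nonneg (by positivity : (0:ℝ) ≤ 1 / ((t : ℝ) + 1))]
      calc ∑ e ∈ E, |w e - w' e| = (1 / ((t : ℝ) + 1)) * ∑ e ∈ E, |w e| := by
            rw [Finset.mul_sum]; exact Finset.sum_congr rfl fun e _ => hdiff e
      _ ≤ (1 / ((t : ℝ) + 1)) * ((t : ℕ) + 1 : ℕ) := by
            apply mul_le_mul_of_nonneg_left _ (by positivity)
            exact_mod_cast ht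
      _ = 1 := by push_cast; field_simp
    calc 𝒜 w C ≤ ENNReal.ofReal (Real.exp ε) * 𝒜 w' C :=
          hDP w w' hnbr C MeasurableSpace.measurableSet_top
    _ ≤ ENNReal.ofReal (Real.exp ε) * ((ENNReal.ofReal (Real.exp ε)) ^ t * 𝒜 (fun _ => 0) C) :=
          mul_le_mul_right (ih w' hnn' h0' hsum' C) _
    _ = (ENNReal.ofReal (Real.exp ε)) ^ (t + 1) * 𝒜 (fun _ => 0) C := by
          rw [pow_succ]; ring

section InstanceLemmas
noncomputable section
variable {n m : ℕ}


def lvm (h : 2 * m ≤ n) (i : Fin m) : Fin n := ⟨i.1, by have := i.2; omega⟩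

def rvm (h : 2 * m ≤ n) (i : Fin m) : Fin n := ⟨m + i.1, by have := i.2; omega⟩

lemma lvm_inj (h : 2 * m ≤ n) : Function.Injective (lvm h) := by
  intro i j hij
  have : (lvm h i).1 = (lvm h j).1 := by rw [hij]
  exact Fin.ext this

lemma rvm_inj (h : 2 * m ≤ n) : Function.Injective (rvm h) := by
  intro i j hij
  have : (rvm h i).1 = (rvm h j).1 := by rw [hij]
  simp only [rvm] at this
  exact Fin.ext (by omega)

lemma lvm_ne_rvm (h : 2 * m ≤ n) (i j : Fin m) : lvm h i ≠ rvm h j := by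
  intro hEq
  have : (lvm h i).1 = (rvm h j).1 := by rw [hEq]
  simp only [lvm, rvm] at this
  have := i.2
  omega

def Hm (h : 2 * m ≤ n) (pp : Equiv.Perm (Fin m)) : Finset (Fin n × Fin n) :=
  Finset.univ.image (fun i => (lvm h i, rvm h (pp i)))

def wtm (h : 2 * m ≤ n) (W : ℝ) (pp : Equiv.Perm (Fin m)) : Fin n × Fin n → ℝ :=
  fun e => if e ∈ Hm h pp then W else 0

lemma edge_inj (h : 2 * m ≤ n) (pp : Equiv.Perm (Fin m)) :
    Function.Injective (fun i => (lvm h i, rvm h (pp i))) := by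
  intro i j hij
  exact lvm_inj h (congrArg Prod.fst hij)

lemma Hm_subset (h : 2 * m ≤ n) (pp : Equiv.Perm (Fin m)) : Hm h pp ⊆ completeE n := by
  intro e he
  simp only [Hm, mem_image, mem_univ, true_and] at he
  obtain ⟨i, rfl⟩ := he
  simp only [completeE, mem_filter, mem_univ, true_and]
  show lvm h i < rvm h (pp i)
  rw [Fin.lt_def]
  simp only [lvm, rvm]
  have := i.2
  omega

lemma wtm_nonneg (h : 2 * m ≤ n) {W : ℝ} (hW : 0 ≤ W) (pp : Equiv.Perm (Fin m)) (e : Fin n × Fin n) :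
    0 ≤ wtm h W pp e := by
  unfold wtm; split <;> simp [hW]

lemma wtm_off (h : 2 * m ≤ n) (W : ℝ) (pp : Equiv.Perm (Fin m)) :
    ∀ e ∉ completeE n, wtm h W pp e = 0 := by
  intro e he
  unfold wtm
  rw [if_neg (fun hmem => he (Hm_subset h pp hmem))]

lemma Hm_card (h : 2 * m ≤ n) (pp : Equiv.Perm (Fin m)) : (Hm h pp).card = m := by
  rw [Hm, Finset.card_image_of_injective _ (edge_inj h pp), Finset.card_univ, Fintype.card_fin]

def crossm (h : 2 * m ≤ n) (pp : Equiv.Perm (Fin m)) (S : Finset (Fin n)) : Finset (Fin m) :=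
  Finset.univ.filter (fun i =>
    (lvm h i ∈ S ∧ rvm h (pp i) ∉ S) ∨ (lvm h i ∉ S ∧ rvm h (pp i) ∈ S))

lemma cutWeight_wtm (h : 2 * m ≤ n) (W : ℝ) (pp : Equiv.Perm (Fin m)) (S : Finset (Fin n)) :
    cutWeight (completeE n) (wtm h W pp) S (Finset.univ \ S) = W * (crossm h pp S).card := by
  classical
  unfold cutWeight wtm
  set P : Fin n × Fin n → Prop := fun e =>
    (e.1 ∈ S ∧ e.2 ∈ Finset.univ \ S) ∨ (e.1 ∈ Finset.univ \ S ∧ e.2 ∈ S) with hP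
  rw [← Finset.sum_filter (fun e => e ∈ Hm h pp) (fun _ => W)]
  have h1 : ((completeE n).filter P).filter (fun e => e ∈ Hm h pp) = (Hm h pp).filter P := by
    ext e
    simp only [mem_filter]
    constructor
    · rintro ⟨⟨_, hPe⟩, hH⟩; exact ⟨hH, hPe⟩
    · rintro ⟨hH, hPe⟩; exact ⟨⟨Hm_subset h pp hH, hPe⟩, hH⟩
  rw [h1, Hm, Finset.filter_image, Finset.sum_const,
    Finset.card_image_of_injective _ (edge_inj h pp), nsmul_eq_mul, mul_comm]
  congr 2
  unfold crossm
  apply congrArg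
  ext i
  simp only [hP, Finset.mem_filter, Finset.mem_sdiff, Finset.mem_univ, true_and]

lemma sparsity_wtm (h : 2 * m ≤ n) (W : ℝ) (pp : Equiv.Perm (Fin m)) (S : Finset (Fin n)) :
    sparsity (completeE n) (wtm h W pp) S = W * (crossm h pp S).card / S.card := by
  rw [sparsity, cutWeight_wtm]

lemma sum_abs_wtm (h : 2 * m ≤ n) (W : ℝ) (pp : Equiv.Perm (Fin m)) :
    ∑ e ∈ completeE n, |wtm h W pp e| = m * |W| := by
  classical
  have habs : ∀ e, |wtm h W pp e| = if e ∈ Hm h pp then |W| else 0 := by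
    intro e; unfold wtm; split <;> simp
  rw [Finset.sum_congr rfl (fun e _ => habs e),
    ← Finset.sum_filter (fun e => e ∈ Hm h pp) (fun _ => |W|)]
  have : (completeE n).filter (fun e => e ∈ Hm h pp) = Hm h pp := by
    ext e
    simp only [mem_filter]
    exact ⟨fun he => he.2, fun he => ⟨Hm_subset h pp he, he⟩⟩
  rw [this, Finset.sum_const, Hm_card, nsmul_eq_mul]

lemma sparsity_nonneg {E : Finset (Fin n × Fin n)} {w : Fin n × Fin n → ℝ}
    (hw : ∀ e, 0 ≤ w e) (S : Finset (Fin n)) : 0 ≤ sparsity E w S := by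
  unfold sparsity cutWeight
  apply div_nonneg (Finset.sum_nonneg fun e _ => hw e) (by positivity)

lemma crossm_T_empty (h : 2 * m ≤ n) (pp : Equiv.Perm (Fin m)) (A₀ : Finset (Fin m)) :
    crossm h pp ((A₀.image (lvm h)) ∪ (A₀.image fun i => rvm h (pp i))) = ∅ := by
  classical
  set T := (A₀.image (lvm h)) ∪ (A₀.image fun i => rvm h (pp i)) with hT
  have hlv : ∀ i : Fin m, lvm h i ∈ T ↔ i ∈ A₀ := by
    intro i
    rw [hT, Finset.mem_union]
    constructor
    · rintro (hmem | hmem)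
      · obtain ⟨j, hj, hji⟩ := Finset.mem_image.1 hmem
        rwa [← lvm_inj h hji]
      · obtain ⟨j, _, hji⟩ := Finset.mem_image.1 hmem
        exact absurd hji.symm (lvm_ne_rvm h i (pp j))
    · intro hi
      exact Or.inl (Finset.mem_image_of_mem _ hi)
  have hrv : ∀ i : Fin m, rvm h (pp i) ∈ T ↔ i ∈ A₀ := by
    intro i
    rw [hT, Finset.mem_union]
    constructor
    · rintro (hmem | hmem)
      · obtain ⟨j, _, hji⟩ := Finset.mem_image.1 hmem
        exact absurd hji (lvm_ne_rvm h j (pp i))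
      · obtain ⟨j, hj, hji⟩ := Finset.mem_image.1 hmem
        have := pp.injective (rvm_inj h hji)
        rwa [← this]
    · intro hi
      exact Or.inr (Finset.mem_image_of_mem _ hi)
  rw [crossm, Finset.filter_eq_empty_iff]
  intro i _
  rw [hlv, hrv]
  tauto

lemma phiBal_wtm (h : 2 * m ≤ n) (hn : n ≤ 2 * m + 1) (hm : 12 ≤ m)
    {W : ℝ} (hW : 0 ≤ W) (pp : Equiv.Perm (Fin m)) :
    phiBal (completeE n) (wtm h W pp) = 0 := by
  classical
  set k : ℕ := (n + 5) / 6 with hk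
  have hkm : k ≤ m := by omega
  obtain ⟨A₀, hA₀sub, hA₀card⟩ := Finset.exists_subset_card_eq
    (show k ≤ (Finset.univ : Finset (Fin m)).card by
      rw [Finset.card_univ, Fintype.card_fin]; exact hkm)
  set T := (A₀.image (lvm h)) ∪ (A₀.image fun i => rvm h (pp i)) with hT
  have hTcard : T.card = 2 * k := by
    rw [hT, Finset.card_union_of_disjoint, Finset.card_image_of_injective _ (lvm_inj h),
      Finset.card_image_of_injective _ (fun i j hij => pp.injective (rvm_inj h hij)), hA₀card]
    · ring
    · rw [Finset.disjoint_left]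
      intro x hx hx'
      obtain ⟨i, _, rfl⟩ := Finset.mem_image.1 hx
      obtain ⟨j, _, hji⟩ := Finset.mem_image.1 hx'
      exact absurd hji (lvm_ne_rvm h i (pp j)).symm
  have hTspars : sparsity (completeE n) (wtm h W pp) T = 0 := by
    rw [sparsity_wtm, hT, crossm_T_empty]
    simp
  have hmem0 : (0 : ℝ) ∈ {c | ∃ S : Finset (Fin n), BalancedCut n S ∧ 2 * S.card ≤ n ∧
      c = sparsity (completeE n) (wtm h W pp) S} := by
    refine ⟨T, ⟨?_, ?_⟩, ?_, hTspars.symm⟩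
    · rw [hTcard]; omega
    · rw [hTcard]; omega
    · rw [hTcard]; omega
  have hbdd : ∀ x ∈ {c | ∃ S : Finset (Fin n), BalancedCut n S ∧ 2 * S.card ≤ n ∧
      c = sparsity (completeE n) (wtm h W pp) S}, (0:ℝ) ≤ x := by
    rintro x ⟨S, _, _, rfl⟩
    exact sparsity_nonneg (wtm_nonneg h hW pp) S
  unfold phiBal
  apply le_antisymm
  · exact csInf_le ⟨0, hbdd⟩ hmem0
  · exact le_csInf ⟨0, hmem0⟩ hbdd

lemma two_pow_le_choose' : ∀ (q M b : ℕ), q ≤ b → b + q ≤ M → 2 ^ q ≤ M.choose b := by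
  intro q
  induction q with
  | zero => intro M b h1 h2; simpa using Nat.succ_le_of_lt (Nat.choose_pos (by omega))
  | succ q ih =>
    intro M b h1 h2
    obtain ⟨M', rfl⟩ : ∃ M', M = M' + 1 := ⟨M - 1, by omega⟩
    obtain ⟨b', rfl⟩ : ∃ b', b = b' + 1 := ⟨b - 1, by omega⟩
    rw [Nat.choose_succ_succ]
    have h3 := ih M' b' (by omega) (by omega)
    have h4 := ih M' (b' + 1) (by omega) (by omega)
    calc 2 ^ (q + 1) = 2 ^ q + 2 ^ q := by ring
    _ ≤ _ := Nat.add_le_add h3 h4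

lemma card_preim_perm {B : Finset (Fin m)} (pp : Equiv.Perm (Fin m)) :
    (Finset.univ.filter fun i => pp i ∈ B).card = B.card := by
  classical
  have : (Finset.univ.filter fun i => pp i ∈ B) = B.image pp.symm := by
    ext j
    simp only [Finset.mem_filter, Finset.mem_univ, true_and, Finset.mem_image]
    constructor
    · intro hj; exact ⟨pp j, hj, pp.symm_apply_apply j⟩
    · rintro ⟨b, hb, rfl⟩; simpa using hb
  rw [this, Finset.card_image_of_injective _ pp.symm.injective]

lemma crossm_eq_filter (h : 2 * m ≤ n) (pp : Equiv.Perm (Fin m)) (S : Finset (Fin n)) :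
    crossm h pp S = Finset.univ.filter (fun i =>
      (i ∈ Finset.univ.filter (fun j : Fin m => lvm h j ∈ S) ∧
        pp i ∉ Finset.univ.filter (fun j : Fin m => rvm h j ∈ S)) ∨
      (i ∉ Finset.univ.filter (fun j : Fin m => lvm h j ∈ S) ∧
        pp i ∈ Finset.univ.filter (fun j : Fin m => rvm h j ∈ S))) := by
  unfold crossm
  apply Finset.filter_congr
  intro i _
  simp only [Finset.mem_filter, Finset.mem_univ, true_and]

lemma ab_card_bounds (h : 2 * m ≤ n) (hn : n ≤ 2 * m + 1) (S : Finset (Fin n)) :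
    (Finset.univ.filter (fun j : Fin m => lvm h j ∈ S)).card +
      (Finset.univ.filter (fun j : Fin m => rvm h j ∈ S)).card ≤ S.card ∧
    S.card ≤ (Finset.univ.filter (fun j : Fin m => lvm h j ∈ S)).card +
      (Finset.univ.filter (fun j : Fin m => rvm h j ∈ S)).card + 1 := by
  classical
  set AS := Finset.univ.filter (fun j : Fin m => lvm h j ∈ S) with hAS
  set BS := Finset.univ.filter (fun j : Fin m => rvm h j ∈ S) with hBS
  constructor
  · have hsub : (AS.image (lvm h)) ∪ (BS.image (rvm h)) ⊆ S := by
      intro v hv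
      rcases Finset.mem_union.1 hv with hv | hv
      · obtain ⟨i, hi, rfl⟩ := Finset.mem_image.1 hv
        exact (Finset.mem_filter.1 hi).2
      · obtain ⟨i, hi, rfl⟩ := Finset.mem_image.1 hv
        exact (Finset.mem_filter.1 hi).2
    calc AS.card + BS.card
        = ((AS.image (lvm h)) ∪ (BS.image (rvm h))).card := by
          rw [Finset.card_union_of_disjoint, Finset.card_image_of_injective _ (lvm_inj h),
            Finset.card_image_of_injective _ (rvm_inj h)]
          rw [Finset.disjoint_left]
          intro x hx hx'
          obtain ⟨i, _, rfl⟩ := Finset.mem_image.1 hx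
          obtain ⟨j, _, hji⟩ := Finset.mem_image.1 hx'
          exact absurd hji (lvm_ne_rvm h i j).symm
    _ ≤ S.card := Finset.card_le_card hsub
  · have hsub : S ⊆ (AS.image (lvm h)) ∪ (BS.image (rvm h)) ∪
        (Finset.univ.filter fun v : Fin n => 2 * m ≤ v.1) := by
      intro v hv
      rcases lt_or_ge v.1 m with hvm | hvm
      · apply Finset.mem_union_left; apply Finset.mem_union_left
        apply Finset.mem_image.2
        refine ⟨⟨v.1, hvm⟩, ?_, ?_⟩
        · rw [hAS, Finset.mem_filter]
          refine ⟨Finset.mem_univ _, ?_⟩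
          have : lvm h ⟨v.1, hvm⟩ = v := Fin.ext rfl
          rwa [this]
        · exact Fin.ext rfl
      rcases lt_or_ge v.1 (2 * m) with hvm2 | hvm2
      · apply Finset.mem_union_left; apply Finset.mem_union_right
        apply Finset.mem_image.2
        refine ⟨⟨v.1 - m, by omega⟩, ?_, ?_⟩
        · rw [hBS, Finset.mem_filter]
          refine ⟨Finset.mem_univ _, ?_⟩
          have : rvm h ⟨v.1 - m, by omega⟩ = v := Fin.ext (by simp [rvm]; omega)
          rwa [this]
        · exact Fin.ext (by simp [rvm]; omega)
      · exact Finset.mem_union_right _ (Finset.mem_filter.2 ⟨Finset.mem_univ _, hvm2⟩)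
    have hthird : (Finset.univ.filter fun v : Fin n => 2 * m ≤ v.1).card ≤ 1 := by
      apply Finset.card_le_one.2
      intro u hu v hv
      have hu' := (Finset.mem_filter.1 hu).2
      have hv' := (Finset.mem_filter.1 hv).2
      have := u.2; have := v.2
      exact Fin.ext (by omega)
    calc S.card ≤ _ := Finset.card_le_card hsub
    _ ≤ ((AS.image (lvm h)) ∪ (BS.image (rvm h))).card +
        (Finset.univ.filter fun v : Fin n => 2 * m ≤ v.1).card := Finset.card_union_le _ _
    _ ≤ (AS.image (lvm h)).card + (BS.image (rvm h)).card + 1 := by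
        have := Finset.card_union_le (AS.image (lvm h)) (BS.image (rvm h))
        omega
    _ = AS.card + BS.card + 1 := by
        rw [Finset.card_image_of_injective _ (lvm_inj h),
          Finset.card_image_of_injective _ (rvm_inj h)]

lemma ab_close (h : 2 * m ≤ n) (pp : Equiv.Perm (Fin m)) (S : Finset (Fin n)) (m₀ : ℕ)
    (hcross : (crossm h pp S).card ≤ m₀) :
    (Finset.univ.filter (fun j : Fin m => lvm h j ∈ S)).card ≤
      (Finset.univ.filter (fun j : Fin m => rvm h j ∈ S)).card + m₀ ∧
    (Finset.univ.filter (fun j : Fin m => rvm h j ∈ S)).card ≤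
      (Finset.univ.filter (fun j : Fin m => lvm h j ∈ S)).card + m₀ := by
  classical
  set AS := Finset.univ.filter (fun j : Fin m => lvm h j ∈ S) with hAS
  set BS := Finset.univ.filter (fun j : Fin m => rvm h j ∈ S) with hBS
  set Bp := Finset.univ.filter (fun i : Fin m => pp i ∈ BS) with hBp
  have hBp_card : Bp.card = BS.card := card_preim_perm pp
  have hcr : ∀ i : Fin m, i ∈ crossm h pp S ↔ ((i ∈ AS ∧ pp i ∉ BS) ∨ (i ∉ AS ∧ pp i ∈ BS)) := by
    intro i
    rw [crossm_eq_filter h pp S, Finset.mem_filter, ← hAS, ← hBS]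
    simp only [Finset.mem_univ, true_and]
  constructor
  · have hsub : AS ⊆ Bp ∪ crossm h pp S := by
      intro i hi
      by_cases hpp : pp i ∈ BS
      · exact Finset.mem_union_left _ (Finset.mem_filter.2 ⟨Finset.mem_univ _, hpp⟩)
      · exact Finset.mem_union_right _ ((hcr i).2 (Or.inl ⟨hi, hpp⟩))
    calc AS.card ≤ (Bp ∪ crossm h pp S).card := Finset.card_le_card hsub
    _ ≤ Bp.card + (crossm h pp S).card := Finset.card_union_le _ _
    _ ≤ BS.card + m₀ := by rw [hBp_card]; omega
  · have hsub : Bp ⊆ AS ∪ crossm h pp S := by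
      intro i hi
      have hpp : pp i ∈ BS := (Finset.mem_filter.1 hi).2
      by_cases hA : i ∈ AS
      · exact Finset.mem_union_left _ hA
      · exact Finset.mem_union_right _ ((hcr i).2 (Or.inr ⟨hA, hpp⟩))
    calc BS.card = Bp.card := hBp_card.symm
    _ ≤ (AS ∪ crossm h pp S).card := Finset.card_le_card hsub
    _ ≤ AS.card + (crossm h pp S).card := Finset.card_union_le _ _
    _ ≤ AS.card + m₀ := by omega

lemma per_S_count (h : 2 * m ≤ n) (hn : n ≤ 2 * m + 1) (m₀ : ℕ)
    (hm₀ : 24 * m₀ + 100 ≤ m) (S : Finset (Fin n)) (hbal : BalancedCut n S) :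
    (Finset.univ.filter fun pp : Equiv.Perm (Fin m) =>
      (crossm h pp S).card ≤ m₀).card * 2 ^ (m / 4) ≤
      (m₀ + 1) * m ^ m₀ * Nat.factorial m := by
  classical
  set AS := Finset.univ.filter (fun j : Fin m => lvm h j ∈ S) with hAS
  set BS := Finset.univ.filter (fun j : Fin m => rvm h j ∈ S) with hBS
  set F := (Finset.univ.filter fun pp : Equiv.Perm (Fin m) => (crossm h pp S).card ≤ m₀) with hF
  rcases F.eq_empty_or_nonempty with hFe | ⟨pp₀, hpp₀⟩
  · rw [hFe]; simp
  · have hpp₀' : (crossm h pp₀ S).card ≤ m₀ := (Finset.mem_filter.1 hpp₀).2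
    have hclose := ab_close h pp₀ S m₀ hpp₀'
    have habs := ab_card_bounds h hn S
    rw [← hAS, ← hBS] at hclose habs
    have hSn : S.card ≤ n := by
      calc S.card ≤ (Finset.univ : Finset (Fin n)).card := Finset.card_le_univ S
      _ = n := by rw [Finset.card_univ, Fintype.card_fin]
    have hbm : BS.card ≤ m := by
      calc BS.card ≤ (Finset.univ : Finset (Fin m)).card := Finset.card_le_univ _
      _ = m := by rw [Finset.card_univ, Fintype.card_fin]
    have hbal1 := hbal.1
    have hbal2 := hbal.2
    -- range of b
    have hq1 : m / 4 ≤ BS.card ∧ BS.card + m / 4 ≤ m := by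
      rcases hclose with ⟨hc1, hc2⟩
      rcases habs with ⟨hab1, hab2⟩
      omega
    have hchoose : 2 ^ (m / 4) ≤ m.choose BS.card := two_pow_le_choose' (m / 4) m BS.card hq1.1 hq1.2
    have hNle : F.card ≤ (m₀ + 1) * m ^ m₀ * (Nat.factorial BS.card * Nat.factorial (m - BS.card)) := by
      have : F = (Finset.univ.filter fun pp : Equiv.Perm (Fin m) =>
          (Finset.univ.filter fun i =>
            (i ∈ AS ∧ pp i ∉ BS) ∨ (i ∉ AS ∧ pp i ∈ BS)).card ≤ m₀) := by
        rw [hF]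
        apply Finset.filter_congr
        intro pp _
        rw [crossm_eq_filter h pp S, ← hAS, ← hBS]
      rw [this]
      exact card_perm_cross_le (by omega) AS BS m₀
    calc F.card * 2 ^ (m / 4)
        ≤ ((m₀ + 1) * m ^ m₀ * (Nat.factorial BS.card * Nat.factorial (m - BS.card))) *
          m.choose BS.card := Nat.mul_le_mul hNle hchoose
    _ = (m₀ + 1) * m ^ m₀ * (m.choose BS.card * Nat.factorial BS.card * Nat.factorial (m - BS.card)) := by
        ring
    _ = (m₀ + 1) * m ^ m₀ * Nat.factorial m := by
        rw [Nat.choose_mul_factorial_mul_factorial hbm]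


end
end InstanceLemmas

lemma final_num {ε : ℝ} {m m₀ t : ℕ} (hεt : ε * t ≤ (m : ℝ) / 20 + 1)
    (hm₀log : ((m₀ : ℝ) + 1) * Real.log ((m : ℝ) + 1) ≤ (m : ℝ) / 25)
    (hm₀m : m₀ ≤ m) (hm : 1000 ≤ m) :
    Real.exp (ε * t) * (((m₀ : ℝ) + 1) * (m : ℝ) ^ m₀) <
      3 / 4 * 2 ^ (m / 4) := by
  have hmR : (1000 : ℝ) ≤ (m : ℝ) := by exact_mod_cast hm
  have h1 : (((m₀ : ℝ) + 1) * (m : ℝ) ^ m₀) ≤ ((m : ℝ) + 1) ^ (m₀ + 1) := by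
    rw [pow_succ']
    apply mul_le_mul
    · have : (m₀ : ℝ) ≤ (m : ℝ) := by exact_mod_cast hm₀m
      linarith
    · apply pow_le_pow_left₀ (by positivity) (by linarith)
    · positivity
    · positivity
  have h2 : ((m : ℝ) + 1) ^ (m₀ + 1) = Real.exp (((m₀ : ℝ) + 1) * Real.log ((m : ℝ) + 1)) := by
    rw [show ((m₀ : ℝ) + 1) = ((m₀ + 1 : ℕ) : ℝ) by push_cast; ring, ← Real.log_pow,
      Real.exp_log (by positivity)]
  have h3 : Real.exp (ε * t) * (((m₀ : ℝ) + 1) * (m : ℝ) ^ m₀) ≤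
      Real.exp (ε * t + ((m₀ : ℝ) + 1) * Real.log ((m : ℝ) + 1)) := by
    rw [Real.exp_add]
    apply mul_le_mul_of_nonneg_left _ (Real.exp_nonneg _)
    rw [← h2]; exact h1
  have h4 : (3 : ℝ) / 4 * 2 ^ (m / 4) =
      Real.exp (Real.log (3 / 4) + ((m / 4 : ℕ) : ℝ) * Real.log 2) := by
    rw [Real.exp_add, Real.exp_log (by norm_num), ← Real.log_pow, Real.exp_log (by positivity)]
  rw [h4]
  apply lt_of_le_of_lt h3
  rw [Real.exp_lt_exp]
  -- numeric part
  have hlog2 : (0.6931471803 : ℝ) < Real.log 2 := Real.log_two_gt_d9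
  have hlog34 : -(1/3 : ℝ) ≤ Real.log (3/4) := by
    have h34 : (3/4 : ℝ) = (4/3)⁻¹ := by norm_num
    rw [h34, Real.log_inv]
    have := Real.log_le_sub_one_of_pos (show (0:ℝ) < 4/3 by norm_num)
    linarith
  have hfloor : ((m : ℝ) - 3) / 4 ≤ ((m / 4 : ℕ) : ℝ) := by
    have h4 : m ≤ 4 * (m / 4) + 3 := by omega
    have : (m : ℝ) ≤ 4 * ((m / 4 : ℕ) : ℝ) + 3 := by exact_mod_cast h4
    linarith
  have hfq : ((m : ℝ) - 3) / 4 * 0.6931471803 ≤ ((m / 4 : ℕ) : ℝ) * Real.log 2 := by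
    apply mul_le_mul hfloor (le_of_lt hlog2) (by norm_num) (by positivity)
  nlinarith [hεt, hm₀log, hfq, hlog34, hmR]


end AuxForStatement7

set_option maxHeartbeats 1000000 in
/-- There is an absolute constant c > 0 such that for every ε ∈ (0,1/20)
and every sufficiently large n, every ε-weight-DP algorithm that on every weighted graph
on n vertices outputs a 1/3-balanced cut has expected additive sparsity error greater
than `c/(ε·log² n)` on some instance. -/
theorem statement_7 :
    ∃ c : ℝ, 0 < c ∧ ∀ ε : ℝ, 0 < ε → ε < 1 / 20 →
      ∃ N : ℕ, ∀ n : ℕ, N ≤ n →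
        ∀ A : (E : Finset (Fin n × Fin n)) →
            (Fin n × Fin n → ℝ) → Measure (Finset (Fin n)),
          (∀ E, IsWeightDP E (A E) ε) →
          (∀ E w, (∀ e ∈ E, 0 ≤ w e) → IsProbabilityMeasure (A E w)) →
          (∀ E w, (∀ e ∈ E, 0 ≤ w e) → (A E w) {S | BalancedCut n S} = 1) →
          ∃ (E : Finset (Fin n × Fin n)) (w : Fin n × Fin n → ℝ),
            (∀ e ∈ E, 0 ≤ w e) ∧
            phiBal E w + c / (ε * (Real.logb 2 n) ^ 2) <
              ∫ S, sparsity E w S ∂(A E w) := by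
  classical
  refine ⟨1/100000, by norm_num, ?_⟩
  intro ε hε hε20
  refine ⟨10000000000, ?_⟩
  intro n hn A hDP hprob hbalAS
  by_contra hcon
  push_neg at hcon
  -- basic quantities
  set m := n / 2 with hm_def
  have h2m : 2 * m ≤ n := by omega
  have hn2m : n ≤ 2 * m + 1 := by omega
  have hm1000 : 1000000 ≤ m := by omega
  have hn2 : 2 ≤ n := by omega
  have hnR2 : (2:ℝ) ≤ (n:ℝ) := by exact_mod_cast hn2
  have hnRpos : (0:ℝ) < (n:ℝ) := by linarith
  set lb := Real.logb 2 n with hlb_def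
  have hlog2pos : (0:ℝ) < Real.log 2 := Real.log_pos (by norm_num)
  have hlogn2 : Real.log 2 ≤ Real.log n := Real.log_le_log (by norm_num) hnR2
  have hlb1 : 1 ≤ lb := by
    rw [hlb_def, Real.logb, le_div_iff₀ hlog2pos]
    linarith
  have hlbpos : 0 < lb := by linarith
  have hloglb : Real.log 2 * lb = Real.log n := by
    rw [hlb_def, Real.logb]
    field_simp
  set δ := (1/100000 : ℝ) / (ε * lb ^ 2) with hδ_def
  have hδpos : 0 < δ := by rw [hδ_def]; positivity
  set W := 1 / (20 * ε) with hW_def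
  have hWpos : 0 < W := by rw [hW_def]; positivity
  set m₀ := ⌊80 * (1/100000 : ℝ) * n / lb ^ 2⌋₊ with hm₀_def
  have hm₀n : (m₀ : ℝ) ≤ 80 * (1/100000 : ℝ) * n / lb ^ 2 := Nat.floor_le (by positivity)
  have hm₀n' : (m₀ : ℝ) ≤ 80 * (1/100000 : ℝ) * n := by
    apply le_trans hm₀n
    apply div_le_self (by positivity)
    nlinarith
  have hm₀nat : 1000 * m₀ ≤ n := by
    have h1 : (1000 * m₀ : ℝ) ≤ (n : ℝ) := by push_cast; nlinarith
    exact_mod_cast h1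
  have hm₀small : 24 * m₀ + 100 ≤ m := by omega
  set t := ⌈(m:ℝ) * W⌉₊ with ht_def
  have hεt : ε * t ≤ (m:ℝ)/20 + 1 := by
    have h1 : (t:ℝ) < (m:ℝ)*W + 1 := Nat.ceil_lt_add_one (by positivity)
    have h2 : ε * t ≤ ε * ((m:ℝ)*W + 1) := by nlinarith
    have h3 : ε * ((m:ℝ)*W + 1) = (m:ℝ)/20 + ε := by
      rw [hW_def]; field_simp
    rw [h3] at h2
    linarith
  -- the base measure
  set 𝒜 := A (completeE n) with h𝒜
  set ρ := 𝒜 (fun _ => 0) with hρ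
  haveI hρprob : IsProbabilityMeasure ρ := hprob _ _ (fun e _ => le_refl 0)
  set X := ENNReal.ofReal (Real.exp ε) with hX
  set Cset : Equiv.Perm (Fin m) → Set (Finset (Fin n)) :=
    fun pp => {S | BalancedCut n S ∧ (crossm h2m pp S).card ≤ m₀} with hCset
  -- per-permutation lower bound
  have hper : ∀ pp : Equiv.Perm (Fin m), ENNReal.ofReal (3/4) ≤ X ^ t * ρ (Cset pp) := by
    intro pp
    set wpp := wtm h2m W pp with hwpp
    have hwnn : ∀ e, 0 ≤ wpp e := wtm_nonneg h2m hWpos.le pp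
    haveI : IsProbabilityMeasure (𝒜 wpp) := hprob _ _ (fun e _ => hwnn e)
    have hμbal : 𝒜 wpp {S | BalancedCut n S} = 1 := hbalAS _ _ (fun e _ => hwnn e)
    have hint : ∫ S, sparsity (completeE n) wpp S ∂(𝒜 wpp) ≤ δ := by
      have h0 := hcon (completeE n) wpp (fun e _ => hwnn e)
      rwa [hwpp, phiBal_wtm h2m hn2m (by omega) hWpos.le pp, zero_add] at h0
    have hmark := mul_meas_ge_le_integral_of_nonneg
      (μ := 𝒜 wpp) (f := fun S => sparsity (completeE n) wpp S)
      (ae_of_all _ (fun S => sparsity_nonneg hwnn S))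
      Integrable.of_finite (4*δ)
    have hbadR : ((𝒜 wpp) {S | 4*δ ≤ sparsity (completeE n) wpp S}).toReal ≤ 1/4 := by
      have h1 := le_trans hmark hint
      simp only [measureReal_def] at h1
      nlinarith [ENNReal.toReal_nonneg
        (a := (𝒜 wpp) {S | 4*δ ≤ sparsity (completeE n) wpp S})]
    have hbad : (𝒜 wpp) {S | 4*δ ≤ sparsity (completeE n) wpp S} ≤ ENNReal.ofReal (1/4) :=
      (ENNReal.le_ofReal_iff_toReal_le (measure_ne_top _ _) (by norm_num)).2 hbadR
    have hsub : {S | BalancedCut n S} ⊆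
        Cset pp ∪ {S | 4*δ ≤ sparsity (completeE n) wpp S} := by
      intro S hS
      by_cases hc : (crossm h2m pp S).card ≤ m₀
      · exact Or.inl ⟨hS, hc⟩
      · right
        show 4*δ ≤ sparsity (completeE n) wpp S
        rw [hwpp, sparsity_wtm]
        have hSpos : 0 < S.card := by
          have h1 := hS.1
          omega
        have hSn : S.card ≤ n := by
          calc S.card ≤ (Finset.univ : Finset (Fin n)).card := Finset.card_le_univ S
          _ = n := by rw [Finset.card_univ, Fintype.card_fin]
        have hSposR : (0:ℝ) < (S.card : ℝ) := by exact_mod_cast hSpos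
        have hSnR : (S.card : ℝ) ≤ (n : ℝ) := by exact_mod_cast hSn
        have hcge : (m₀:ℝ) + 1 ≤ ((crossm h2m pp S).card : ℝ) := by
          exact_mod_cast (by omega : m₀ + 1 ≤ (crossm h2m pp S).card)
        have hstep1 : 4*δ < W * ((m₀:ℝ)+1) / n := by
          have hfl : 80 * (1/100000 : ℝ) * n / lb ^ 2 < (m₀:ℝ) + 1 :=
            Nat.lt_floor_add_one _
          have hlbsq : (0:ℝ) < lb ^ 2 := by positivity
          have hfl' : 80 * (1/100000 : ℝ) * n < ((m₀:ℝ) + 1) * lb ^ 2 :=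
            (div_lt_iff₀ hlbsq).1 hfl
          rw [show (4:ℝ)*δ = (4*(1/100000))/(ε*lb^2) by rw [hδ_def]; ring,
            div_lt_div_iff₀ (by positivity) hnRpos]
          have hWe : W * ((m₀:ℝ)+1) * (ε*lb^2) = ((m₀:ℝ)+1) * lb^2 / 20 := by
            rw [hW_def]; field_simp
          rw [hWe]
          linarith
        have hstep2 : W * ((m₀:ℝ)+1) / n ≤ W * ((crossm h2m pp S).card : ℝ) / S.card := by
          have hnum : W * ((m₀:ℝ)+1) ≤ W * ((crossm h2m pp S).card : ℝ) := by nlinarith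
          exact div_le_div₀ (by positivity) hnum hSposR hSnR
        linarith
    have h34 : ENNReal.ofReal (3/4) ≤ (𝒜 wpp) (Cset pp) := by
      have h1 : (1:ENNReal) ≤ (𝒜 wpp) (Cset pp) + ENNReal.ofReal (1/4) := by
        calc (1:ENNReal) = 𝒜 wpp {S | BalancedCut n S} := hμbal.symm
        _ ≤ 𝒜 wpp (Cset pp ∪ {S | 4*δ ≤ sparsity (completeE n) wpp S}) := measure_mono hsub
        _ ≤ 𝒜 wpp (Cset pp) + 𝒜 wpp {S | 4*δ ≤ sparsity (completeE n) wpp S} :=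
            measure_union_le _ _
        _ ≤ (𝒜 wpp) (Cset pp) + ENNReal.ofReal (1/4) := add_le_add_right hbad _
      have h2 : (1:ENNReal) - ENNReal.ofReal (1/4) = ENNReal.ofReal (3/4) := by
        rw [← ENNReal.ofReal_one, ← ENNReal.ofReal_sub _ (by norm_num)]
        norm_num
      rw [← h2]
      exact tsub_le_iff_right.2 h1
    have hsumabs : ∑ e ∈ completeE n, |wpp e| ≤ (t : ℝ) := by
      rw [hwpp, sum_abs_wtm h2m W pp, abs_of_nonneg hWpos.le]
      calc (m:ℝ) * W ≤ ⌈(m:ℝ) * W⌉₊ := Nat.le_ceil _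
      _ = (t:ℝ) := by rw [ht_def]
    have hchain := dp_chain (completeE n) 𝒜 (hDP (completeE n)) t wpp hwnn
      (wtm_off h2m W pp) hsumabs (Cset pp)
    exact le_trans h34 hchain
  -- summing over permutations
  have hKsum : (Nat.factorial m : ENNReal) * ENNReal.ofReal (3/4) ≤
      X ^ t * ∑ pp : Equiv.Perm (Fin m), ρ (Cset pp) := by
    calc (Nat.factorial m : ENNReal) * ENNReal.ofReal (3/4)
        = ∑ _pp : Equiv.Perm (Fin m), ENNReal.ofReal (3/4) := by
          rw [Finset.sum_const, Finset.card_univ, Fintype.card_perm, Fintype.card_fin,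
            nsmul_eq_mul]
    _ ≤ ∑ pp : Equiv.Perm (Fin m), X ^ t * ρ (Cset pp) :=
          Finset.sum_le_sum (fun pp _ => hper pp)
    _ = X ^ t * ∑ pp : Equiv.Perm (Fin m), ρ (Cset pp) := by rw [Finset.mul_sum]
  -- counting bound
  have hcount : (2 ^ (m/4) : ENNReal) * ∑ pp : Equiv.Perm (Fin m), ρ (Cset pp) ≤
      (((m₀+1) * m ^ m₀ * Nat.factorial m : ℕ) : ENNReal) := by
    have hCeq : ∀ pp : Equiv.Perm (Fin m), Cset pp = ↑(Finset.univ.filter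
        fun S : Finset (Fin n) => BalancedCut n S ∧ (crossm h2m pp S).card ≤ m₀) := by
      intro pp
      ext S
      simp [hCset]
    have hstep : ∑ pp : Equiv.Perm (Fin m), ρ (Cset pp)
        = ∑ S : Finset (Fin n), ((Finset.univ.filter fun pp : Equiv.Perm (Fin m) =>
            BalancedCut n S ∧ (crossm h2m pp S).card ≤ m₀).card : ENNReal) * ρ {S} := by
      calc ∑ pp : Equiv.Perm (Fin m), ρ (Cset pp)
          = ∑ pp : Equiv.Perm (Fin m), ∑ S ∈ (Finset.univ.filter
              fun S : Finset (Fin n) => BalancedCut n S ∧ (crossm h2m pp S).card ≤ m₀),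
              ρ {S} := by
            apply Finset.sum_congr rfl
            intro pp _
            rw [hCeq pp]
            exact meas_finset_eq_sum ρ _
      _ = ∑ pp : Equiv.Perm (Fin m), ∑ S : Finset (Fin n),
            (if BalancedCut n S ∧ (crossm h2m pp S).card ≤ m₀ then ρ {S} else 0) := by
            apply Finset.sum_congr rfl
            intro pp _
            rw [Finset.sum_filter]
      _ = ∑ S : Finset (Fin n), ∑ pp : Equiv.Perm (Fin m),
            (if BalancedCut n S ∧ (crossm h2m pp S).card ≤ m₀ then ρ {S} else 0) :=
            Finset.sum_comm
      _ = _ := by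
            apply Finset.sum_congr rfl
            intro S _
            rw [← Finset.sum_filter, Finset.sum_const, nsmul_eq_mul]
    rw [hstep, Finset.mul_sum]
    have hperS : ∀ S : Finset (Fin n),
        (2 ^ (m/4) : ENNReal) * (((Finset.univ.filter fun pp : Equiv.Perm (Fin m) =>
          BalancedCut n S ∧ (crossm h2m pp S).card ≤ m₀).card : ENNReal) * ρ {S}) ≤
        (((m₀+1) * m ^ m₀ * Nat.factorial m : ℕ) : ENNReal) * ρ {S} := by
      intro S
      by_cases hbalS : BalancedCut n S
      · rw [← mul_assoc]
        apply mul_le_mul_left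
        have hfeq : (Finset.univ.filter fun pp : Equiv.Perm (Fin m) =>
            BalancedCut n S ∧ (crossm h2m pp S).card ≤ m₀)
            = (Finset.univ.filter fun pp : Equiv.Perm (Fin m) =>
              (crossm h2m pp S).card ≤ m₀) := by
          apply Finset.filter_congr
          intro pp _
          simp [hbalS]
        rw [hfeq]
        have hnat := per_S_count h2m hn2m m₀ hm₀small S hbalS
        have hcast : (2 ^ (m/4) : ENNReal) * (((Finset.univ.filter
            fun pp : Equiv.Perm (Fin m) => (crossm h2m pp S).card ≤ m₀).card : ℕ) : ENNReal)
            = (((Finset.univ.filter fun pp : Equiv.Perm (Fin m) =>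
              (crossm h2m pp S).card ≤ m₀).card * 2 ^ (m/4) : ℕ) : ENNReal) := by
          push_cast
          ring
        rw [hcast]
        exact_mod_cast hnat
      · have hfeq : (Finset.univ.filter fun pp : Equiv.Perm (Fin m) =>
            BalancedCut n S ∧ (crossm h2m pp S).card ≤ m₀) = ∅ := by
          apply Finset.filter_false_of_mem
          intro pp _
          simp [hbalS]
        rw [hfeq]
        simp
    calc ∑ S : Finset (Fin n), (2 ^ (m/4) : ENNReal) *
          (((Finset.univ.filter fun pp : Equiv.Perm (Fin m) =>
            BalancedCut n S ∧ (crossm h2m pp S).card ≤ m₀).card : ENNReal) * ρ {S})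
        ≤ ∑ S : Finset (Fin n), (((m₀+1) * m ^ m₀ * Nat.factorial m : ℕ) : ENNReal) * ρ {S} :=
          Finset.sum_le_sum (fun S _ => hperS S)
    _ = (((m₀+1) * m ^ m₀ * Nat.factorial m : ℕ) : ENNReal) * ∑ S : Finset (Fin n), ρ {S} := by
          rw [Finset.mul_sum]
    _ = (((m₀+1) * m ^ m₀ * Nat.factorial m : ℕ) : ENNReal) := by
          have huniv : ∑ S : Finset (Fin n), ρ {S} = 1 := by
            have h1 := meas_finset_eq_sum ρ Finset.univ
            rw [Finset.coe_univ] at h1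
            rw [← h1, measure_univ]
          rw [huniv, mul_one]
  -- combine in ENNReal
  have hfinal : (2 ^ (m/4) : ENNReal) * ((Nat.factorial m : ENNReal) * ENNReal.ofReal (3/4)) ≤
      X ^ t * (((m₀+1) * m ^ m₀ * Nat.factorial m : ℕ) : ENNReal) :=
    calc (2 ^ (m/4) : ENNReal) * ((Nat.factorial m : ENNReal) * ENNReal.ofReal (3/4))
        ≤ (2 ^ (m/4) : ENNReal) * (X ^ t * ∑ pp : Equiv.Perm (Fin m), ρ (Cset pp)) :=
          mul_le_mul_right hKsum _
    _ = X ^ t * ((2 ^ (m/4) : ENNReal) * ∑ pp : Equiv.Perm (Fin m), ρ (Cset pp)) := by ring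
    _ ≤ X ^ t * (((m₀+1) * m ^ m₀ * Nat.factorial m : ℕ) : ENNReal) :=
          mul_le_mul_right hcount _
  -- move to ℝ
  have hRHSne : X ^ t * (((m₀+1) * m ^ m₀ * Nat.factorial m : ℕ) : ENNReal) ≠ ⊤ := by
    apply ENNReal.mul_ne_top
    · apply ENNReal.pow_ne_top
      rw [hX]
      exact ENNReal.ofReal_ne_top
    · exact ENNReal.natCast_ne_top _
  have hreal := ENNReal.toReal_mono hRHSne hfinal
  rw [ENNReal.toReal_mul, ENNReal.toReal_mul, ENNReal.toReal_mul] at hreal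
  rw [ENNReal.toReal_pow, ENNReal.toReal_pow] at hreal
  rw [ENNReal.toReal_ofReal (by norm_num : (0:ℝ) ≤ 3/4)] at hreal
  rw [ENNReal.toReal_natCast, ENNReal.toReal_natCast] at hreal
  rw [hX, ENNReal.toReal_ofReal (Real.exp_nonneg ε)] at hreal
  have htoReal2 : ((2:ENNReal)).toReal = (2:ℝ) := by simp
  rw [htoReal2] at hreal
  -- final numeric contradiction
  have hm₀m : m₀ ≤ m := by omega
  have hm₀log : ((m₀ : ℝ) + 1) * Real.log ((m : ℝ) + 1) ≤ (m : ℝ) / 25 := by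
    have hmpos : (0:ℝ) < (m:ℝ) := by
      have h0 : (0:ℕ) < m := by omega
      exact_mod_cast h0
    have hm1R : (1000000:ℝ) ≤ (m:ℝ) := by exact_mod_cast hm1000
    have hmn : (m:ℝ) + 1 ≤ (n:ℝ) := by
      have h0 : m + 1 ≤ n := by omega
      exact_mod_cast h0
    have hnm3 : (n:ℝ) ≤ 3 * (m:ℝ) := by
      have h0 : n ≤ 3 * m := by omega
      exact_mod_cast h0
    have hlogmn : Real.log ((m:ℝ) + 1) ≤ Real.log n :=
      Real.log_le_log (by positivity) hmn
    have hlogpos : 0 ≤ Real.log ((m:ℝ) + 1) :=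
      Real.log_nonneg (by linarith)
    have hm₀lb : (m₀:ℝ) * lb ≤ 80 * (1/100000) * (n:ℝ) := by
      have h1 : (m₀:ℝ) * lb ≤ (80 * (1/100000) * n / lb ^ 2) * lb :=
        mul_le_mul_of_nonneg_right hm₀n (by positivity)
      have h2 : (80 * (1/100000:ℝ) * n / lb ^ 2) * lb = 80 * (1/100000) * n / lb := by
        field_simp
      have h3 : 80 * (1/100000:ℝ) * n / lb ≤ 80 * (1/100000) * n :=
        div_le_self (by positivity) hlb1
      rw [h2] at h1
      linarith
    have hm₀log1 : (m₀:ℝ) * Real.log ((m:ℝ) + 1) ≤ Real.log 2 * (80 * (1/100000) * (n:ℝ)) := by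
      have h1 : (m₀:ℝ) * Real.log ((m:ℝ) + 1) ≤ (m₀:ℝ) * Real.log n :=
        mul_le_mul_of_nonneg_left hlogmn (by positivity)
      have h2 : (m₀:ℝ) * Real.log n = Real.log 2 * ((m₀:ℝ) * lb) := by
        rw [← hloglb]; ring
      have h3 : Real.log 2 * ((m₀:ℝ) * lb) ≤ Real.log 2 * (80 * (1/100000) * (n:ℝ)) :=
        mul_le_mul_of_nonneg_left hm₀lb hlog2pos.le
      linarith
    have hlog2lt1 : Real.log 2 < 1 := by
      have h0 := Real.log_lt_sub_one_of_pos (show (0:ℝ) < 2 by norm_num) (by norm_num)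
      linarith
    have hsqrt : Real.log ((m:ℝ) + 1) ≤ 2 * Real.sqrt ((m:ℝ) + 1) := by
      have h1 : Real.log ((m:ℝ) + 1) = 2 * Real.log (Real.sqrt ((m:ℝ) + 1)) := by
        rw [Real.log_sqrt (by positivity)]
        ring
      have h2 : Real.log (Real.sqrt ((m:ℝ) + 1)) ≤ Real.sqrt ((m:ℝ) + 1) - 1 :=
        (Real.log_lt_sub_one_of_pos (Real.sqrt_pos.2 (by positivity))
          (by
            intro hone
            have h3 : Real.sqrt ((m:ℝ) + 1) ^ 2 = (m:ℝ) + 1 := Real.sq_sqrt (by positivity)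
            rw [hone] at h3
            norm_num at h3
            linarith)).le
      linarith
    have hsqrt2 : Real.sqrt ((m:ℝ) + 1) ≤ (m:ℝ) / 999 := by
      have h1 : (m:ℝ) + 1 ≤ ((m:ℝ)/999) ^ 2 := by
        nlinarith [mul_le_mul_of_nonneg_left hm1R hmpos.le]
      calc Real.sqrt ((m:ℝ) + 1) ≤ Real.sqrt (((m:ℝ)/999) ^ 2) := Real.sqrt_le_sqrt h1
      _ = (m:ℝ)/999 := Real.sqrt_sq (by positivity)
    nlinarith [hm₀log1, hlog2lt1, hnRpos, hnm3, hsqrt, hsqrt2, hlogpos, hlog2pos]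
  have hexp : Real.exp ε ^ t = Real.exp (ε * t) := by
    rw [← Real.exp_nat_mul, mul_comm]
  have hfn := final_num hεt hm₀log hm₀m (by omega : 1000 ≤ m)
  have hfacpos : (0:ℝ) < (Nat.factorial m : ℝ) := by
    exact_mod_cast Nat.factorial_pos m
  rw [hexp] at hreal
  push_cast at hreal
  nlinarith [mul_lt_mul_of_pos_right hfn hfacpos, hreal]


end DPHC
end

section
/- Let G = (V,E,w) be a weighted graph on n vertices with nonnegative weights, and let T be any 1/3-balanced HC tree of V. For each internal node of T with cluster H, let S^min_H ⊆ H be a cut of the induced weighted subgraph G[H] of minimum weight w(S^min_H, H∖S^min_H) among cuts S ⊆ H with |H|/3 ≤ |S| ≤ |H|/2. Then the sum over all internal nodes H of T of 2·w(S^min_H, H∖S^min_H)·|H| is at most 18·OPT_G. -/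
open MeasureTheory Real

namespace DPHC

open HCTree

/-! ### Auxiliary lemmas for Statement 11 -/

namespace HCTree

variable {V : Type} [DecidableEq V]

lemma mem_leafFinset {t : HCTree V} {v : V} : v ∈ t.leafFinset ↔ v ∈ t.leaves :=
  List.mem_toFinset

lemma leafFinset_node (l r : HCTree V) :
    (node l r).leafFinset = l.leafFinset ∪ r.leafFinset := by
  simp [leafFinset, leaves]

lemma leaves_length (t : HCTree V) : t.leaves.length = t.leafCount := by
  induction t with
  | leaf v => rfl
  | node l r ihl ihr => simp [leaves, leafCount, ihl, ihr]

lemma leafCount_pos (t : HCTree V) : 1 ≤ t.leafCount := by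
  induction t with
  | leaf v => exact le_refl 1
  | node l r ihl ihr => simp only [leafCount]; omega

lemma card_leafFinset {t : HCTree V} (h : t.leaves.Nodup) :
    t.leafFinset.card = t.leafCount := by
  rw [leafFinset, List.toFinset_card_of_nodup h, leaves_length]

lemma nodup_node {l r : HCTree V} (h : (node l r).leaves.Nodup) :
    l.leaves.Nodup ∧ r.leaves.Nodup ∧ l.leaves.Disjoint r.leaves := by
  have h' : (l.leaves ++ r.leaves).Nodup := h
  exact List.nodup_append'.mp h'

lemma disjoint_leafFinset {l r : HCTree V} (h : l.leaves.Disjoint r.leaves) :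
    Disjoint l.leafFinset r.leafFinset := by
  rw [Finset.disjoint_left]
  intro a hal har
  exact h (mem_leafFinset.mp hal) (mem_leafFinset.mp har)

lemma cluster_subset {t : HCTree V} {H : Finset V} (h : H ∈ t.internalClusters) :
    H ⊆ t.leafFinset := by
  induction t with
  | leaf v => simp [internalClusters] at h
  | node l r ihl ihr =>
    simp only [internalClusters, List.mem_cons, List.mem_append] at h
    rw [leafFinset_node]
    rcases h with rfl | h | h
    · exact Finset.Subset.refl _
    · exact (ihl h).trans Finset.subset_union_left
    · exact (ihr h).trans Finset.subset_union_right

lemma cluster_card_ge_two {t : HCTree V} (hnd : t.leaves.Nodup) {H : Finset V}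
    (h : H ∈ t.internalClusters) : 2 ≤ H.card := by
  induction t with
  | leaf v => simp [internalClusters] at h
  | node l r ihl ihr =>
    obtain ⟨hndl, hndr, hdisj⟩ := nodup_node hnd
    simp only [internalClusters, List.mem_cons, List.mem_append] at h
    rcases h with rfl | h | h
    · rw [Finset.card_union_of_disjoint (disjoint_leafFinset hdisj),
        card_leafFinset hndl, card_leafFinset hndr]
      have := leafCount_pos l
      have := leafCount_pos r
      omega
    · exact ihl hndl h
    · exact ihr hndr h

lemma lcaSize_comm (t : HCTree V) (u v : V) : t.lcaSize u v = t.lcaSize v u := by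
  induction t with
  | leaf a => rfl
  | node l r ihl ihr =>
    simp only [lcaSize]
    by_cases h1 : u ∈ l.leaves ∧ v ∈ l.leaves
    · rw [if_pos h1, if_pos ⟨h1.2, h1.1⟩, ihl]
    · rw [if_neg h1, if_neg (fun h : v ∈ l.leaves ∧ u ∈ l.leaves => h1 ⟨h.2, h.1⟩)]
      by_cases h2 : u ∈ r.leaves ∧ v ∈ r.leaves
      · rw [if_pos h2, if_pos ⟨h2.2, h2.1⟩, ihr]
      · rw [if_neg h2, if_neg (fun h : v ∈ r.leaves ∧ u ∈ r.leaves => h2 ⟨h.2, h.1⟩)]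

/-- The extraction lemma: from any HC tree `t` one can extract a 1/3-balanced cut of
`H` such that every crossing pair inside `t` has a large LCA in `t`. -/
lemma extract (H : Finset V) (h2 : 2 ≤ H.card) :
    ∀ t : HCTree V, t.leaves.Nodup → 2 * H.card ≤ 3 * (H ∩ t.leafFinset).card →
    ∃ S : Finset V, S ⊆ H ∧ H.card ≤ 3 * S.card ∧ 2 * S.card ≤ H.card ∧
      (H \ t.leafFinset ⊆ S ∨ H \ t.leafFinset ⊆ H \ S) ∧
      ∀ u ∈ H, ∀ v ∈ H, u ∈ S → v ∉ S → u ∈ t.leafFinset → v ∈ t.leafFinset →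
        H.card ≤ 3 * t.lcaSize u v := by
  intro t
  induction t with
  | leaf a =>
    intro _ hbig
    exfalso
    have : (H ∩ (leaf a : HCTree V).leafFinset).card ≤ 1 := by
      have : H ∩ (leaf a : HCTree V).leafFinset ⊆ {a} := by
        intro x hx
        have := (Finset.mem_inter.mp hx).2
        simpa [leafFinset, leaves] using this
      simpa using Finset.card_le_card this
    omega
  | node l r ihl ihr =>
    intro hnd hbig
    obtain ⟨hndl, hndr, hdisj⟩ := nodup_node hnd
    have hLf : (node l r).leafFinset = l.leafFinset ∪ r.leafFinset := leafFinset_node l r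
    set A := H ∩ l.leafFinset with hA
    set B := H ∩ r.leafFinset with hB
    have hABdisj : Disjoint A B :=
      Finset.disjoint_of_subset_left Finset.inter_subset_right
        (Finset.disjoint_of_subset_right Finset.inter_subset_right
          (disjoint_leafFinset hdisj))
    have hABcard : (H ∩ (node l r).leafFinset).card = A.card + B.card := by
      rw [hLf, Finset.inter_union_distrib_left, ← hA, ← hB,
        Finset.card_union_of_disjoint hABdisj]
    have hAlc : A.card ≤ l.leafCount := by
      rw [← card_leafFinset hndl]
      exact Finset.card_le_card Finset.inter_subset_right
    have hBlc : B.card ≤ r.leafCount := by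
      rw [← card_leafFinset hndr]
      exact Finset.card_le_card Finset.inter_subset_right
    -- membership helpers
    have memA : ∀ {x}, x ∈ H → x ∈ (node l r).leafFinset → x ∉ A → x ∈ r.leaves := by
      intro x hxH hxt hxA
      have := mem_leafFinset.mp hxt
      simp only [leaves, List.mem_append] at this
      rcases this with h | h
      · exact absurd (Finset.mem_inter.mpr ⟨hxH, mem_leafFinset.mpr h⟩) hxA
      · exact h
    have memB : ∀ {x}, x ∈ H → x ∈ (node l r).leafFinset → x ∉ B → x ∈ l.leaves := by
      intro x hxH hxt hxB
      have := mem_leafFinset.mp hxt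
      simp only [leaves, List.mem_append] at this
      rcases this with h | h
      · exact h
      · exact absurd (Finset.mem_inter.mpr ⟨hxH, mem_leafFinset.mpr h⟩) hxB
    have lca_cross : ∀ u v : V,
        (u ∈ l.leaves ∧ v ∈ r.leaves) ∨ (u ∈ r.leaves ∧ v ∈ l.leaves) →
        (node l r).lcaSize u v = l.leafCount + r.leafCount := by
      intro u v huv
      rcases huv with ⟨h1, h2'⟩ | ⟨h1, h2'⟩
      · have hv : v ∉ l.leaves := fun h => hdisj h h2'
        have hu : u ∉ r.leaves := fun h => hdisj h1 h
        simp [lcaSize, hv, hu]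
      · have hu : u ∉ l.leaves := fun h => hdisj h h1
        have hv : v ∉ r.leaves := fun h => hdisj h2' h
        simp [lcaSize, hu, hv]
    by_cases hca : 2 * H.card ≤ 3 * A.card
    · -- recurse into the left subtree
      obtain ⟨S, hSH, h3S, h2S, hinv, hcross⟩ := ihl hndl hca
      refine ⟨S, hSH, h3S, h2S, ?_, ?_⟩
      · have hmono : H \ (node l r).leafFinset ⊆ H \ l.leafFinset :=
          Finset.sdiff_subset_sdiff (le_refl H)
            (by rw [hLf]; exact Finset.subset_union_left)
        rcases hinv with h | h
        · exact Or.inl (hmono.trans h)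
        · exact Or.inr (hmono.trans h)
      · intro u hu v hv huS hvS hut hvt
        by_cases hul : u ∈ l.leaves
        · by_cases hvl : v ∈ l.leaves
          · have heq : (node l r).lcaSize u v = l.lcaSize u v := by
              simp [lcaSize, hul, hvl]
            rw [heq]
            exact hcross u hu v hv huS hvS (mem_leafFinset.mpr hul) (mem_leafFinset.mpr hvl)
          · have hvr : v ∈ r.leaves := memA hv hvt
              (fun h => hvl (mem_leafFinset.mp (Finset.mem_inter.mp h).2))
            rw [lca_cross u v (Or.inl ⟨hul, hvr⟩)]
            omega
        · by_cases hvl : v ∈ l.leaves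
          · have hur : u ∈ r.leaves := memA hu hut
              (fun h => hul (mem_leafFinset.mp (Finset.mem_inter.mp h).2))
            rw [lca_cross u v (Or.inr ⟨hur, hvl⟩)]
            omega
          · exfalso
            have hu' : u ∈ H \ l.leafFinset :=
              Finset.mem_sdiff.mpr ⟨hu, fun h => hul (mem_leafFinset.mp h)⟩
            have hv' : v ∈ H \ l.leafFinset :=
              Finset.mem_sdiff.mpr ⟨hv, fun h => hvl (mem_leafFinset.mp h)⟩
            rcases hinv with h | h
            · exact hvS (h hv')
            · exact (Finset.mem_sdiff.mp (h hu')).2 huS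
    · by_cases hcb : 2 * H.card ≤ 3 * B.card
      · -- recurse into the right subtree
        obtain ⟨S, hSH, h3S, h2S, hinv, hcross⟩ := ihr hndr hcb
        refine ⟨S, hSH, h3S, h2S, ?_, ?_⟩
        · have hmono : H \ (node l r).leafFinset ⊆ H \ r.leafFinset :=
            Finset.sdiff_subset_sdiff (le_refl H)
              (by rw [hLf]; exact Finset.subset_union_right)
          rcases hinv with h | h
          · exact Or.inl (hmono.trans h)
          · exact Or.inr (hmono.trans h)
        · intro u hu v hv huS hvS hut hvt
          by_cases hur : u ∈ r.leaves
          · by_cases hvr : v ∈ r.leaves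
            · have hul : u ∉ l.leaves := fun h => hdisj h hur
              have heq : (node l r).lcaSize u v = r.lcaSize u v := by
                simp [lcaSize, hul, hur, hvr]
              rw [heq]
              exact hcross u hu v hv huS hvS (mem_leafFinset.mpr hur) (mem_leafFinset.mpr hvr)
            · have hvl : v ∈ l.leaves := memB hv hvt
                (fun h => hvr (mem_leafFinset.mp (Finset.mem_inter.mp h).2))
              rw [lca_cross u v (Or.inr ⟨hur, hvl⟩)]
              omega
          · by_cases hvr : v ∈ r.leaves
            · have hul : u ∈ l.leaves := memB hu hut
                (fun h => hur (mem_leafFinset.mp (Finset.mem_inter.mp h).2))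
              rw [lca_cross u v (Or.inl ⟨hul, hvr⟩)]
              omega
            · exfalso
              have hu' : u ∈ H \ r.leafFinset :=
                Finset.mem_sdiff.mpr ⟨hu, fun h => hur (mem_leafFinset.mp h)⟩
              have hv' : v ∈ H \ r.leafFinset :=
                Finset.mem_sdiff.mpr ⟨hv, fun h => hvr (mem_leafFinset.mp h)⟩
              rcases hinv with h | h
              · exact hvS (h hv')
              · exact (Finset.mem_sdiff.mp (h hu')).2 huS
      · -- stop here: both children intersect `H` in less than 2|H|/3 vertices
        rw [hABcard] at hbig
        have crossAB : ∀ u ∈ H, ∀ v ∈ H, u ∈ (node l r).leafFinset →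
            v ∈ (node l r).leafFinset →
            ((u ∈ A ∧ v ∉ A) ∨ (u ∉ A ∧ v ∈ A)) → H.card ≤ 3 * (node l r).lcaSize u v := by
          intro u hu v hv hut hvt hcase
          have : (u ∈ l.leaves ∧ v ∈ r.leaves) ∨ (u ∈ r.leaves ∧ v ∈ l.leaves) := by
            rcases hcase with ⟨h1, h2'⟩ | ⟨h1, h2'⟩
            · exact Or.inl ⟨mem_leafFinset.mp (Finset.mem_inter.mp h1).2, memA hv hvt h2'⟩
            · exact Or.inr ⟨memA hu hut h1, mem_leafFinset.mp (Finset.mem_inter.mp h2').2⟩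
          rw [lca_cross u v this]
          omega
        have crossAB' : ∀ u ∈ H, ∀ v ∈ H, u ∈ (node l r).leafFinset →
            v ∈ (node l r).leafFinset →
            ((u ∈ B ∧ v ∉ B) ∨ (u ∉ B ∧ v ∈ B)) → H.card ≤ 3 * (node l r).lcaSize u v := by
          intro u hu v hv hut hvt hcase
          have : (u ∈ l.leaves ∧ v ∈ r.leaves) ∨ (u ∈ r.leaves ∧ v ∈ l.leaves) := by
            rcases hcase with ⟨h1, h2'⟩ | ⟨h1, h2'⟩
            · exact Or.inr ⟨mem_leafFinset.mp (Finset.mem_inter.mp h1).2, memB hv hvt h2'⟩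
            · exact Or.inl ⟨memB hu hut h1, mem_leafFinset.mp (Finset.mem_inter.mp h2').2⟩
          rw [lca_cross u v this]
          omega
        rcases le_total B.card A.card with hba | hab
        · -- the larger side is A
          by_cases hAhalf : 2 * A.card ≤ H.card
          · refine ⟨A, Finset.inter_subset_left, by omega, hAhalf, ?_, ?_⟩
            · refine Or.inr fun x hx => ?_
              obtain ⟨hxH, hxt⟩ := Finset.mem_sdiff.mp hx
              refine Finset.mem_sdiff.mpr ⟨hxH, fun hxA => ?_⟩
              refine hxt ?_
              rw [hLf]
              exact Finset.mem_union_left _ (Finset.mem_inter.mp hxA).2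
            · intro u hu v hv huS hvS hut hvt
              exact crossAB u hu v hv hut hvt (Or.inl ⟨huS, hvS⟩)
          · have hAH : A ⊆ H := Finset.inter_subset_left
            have hcardS : (H \ A).card = H.card - A.card := Finset.card_sdiff_of_subset hAH
            have hAle : A.card ≤ H.card := Finset.card_le_card hAH
            refine ⟨H \ A, Finset.sdiff_subset, by omega, by omega, ?_, ?_⟩
            · refine Or.inl fun x hx => ?_
              obtain ⟨hxH, hxt⟩ := Finset.mem_sdiff.mp hx
              refine Finset.mem_sdiff.mpr ⟨hxH, fun hxA => ?_⟩
              refine hxt ?_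
              rw [hLf]
              exact Finset.mem_union_left _ (Finset.mem_inter.mp hxA).2
            · intro u hu v hv huS hvS hut hvt
              have huA : u ∉ A := (Finset.mem_sdiff.mp huS).2
              have hvA : v ∈ A := by
                by_contra hvA
                exact hvS (Finset.mem_sdiff.mpr ⟨hv, hvA⟩)
              exact crossAB u hu v hv hut hvt (Or.inr ⟨huA, hvA⟩)
        · -- the larger side is B
          by_cases hBhalf : 2 * B.card ≤ H.card
          · refine ⟨B, Finset.inter_subset_left, by omega, hBhalf, ?_, ?_⟩
            · refine Or.inr fun x hx => ?_
              obtain ⟨hxH, hxt⟩ := Finset.mem_sdiff.mp hx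
              refine Finset.mem_sdiff.mpr ⟨hxH, fun hxB => ?_⟩
              refine hxt ?_
              rw [hLf]
              exact Finset.mem_union_right _ (Finset.mem_inter.mp hxB).2
            · intro u hu v hv huS hvS hut hvt
              exact crossAB' u hu v hv hut hvt (Or.inl ⟨huS, hvS⟩)
          · have hBH : B ⊆ H := Finset.inter_subset_left
            have hcardS : (H \ B).card = H.card - B.card := Finset.card_sdiff_of_subset hBH
            have hBle : B.card ≤ H.card := Finset.card_le_card hBH
            refine ⟨H \ B, Finset.sdiff_subset, by omega, by omega, ?_, ?_⟩
            · refine Or.inl fun x hx => ?_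
              obtain ⟨hxH, hxt⟩ := Finset.mem_sdiff.mp hx
              refine Finset.mem_sdiff.mpr ⟨hxH, fun hxB => ?_⟩
              refine hxt ?_
              rw [hLf]
              exact Finset.mem_union_right _ (Finset.mem_inter.mp hxB).2
            · intro u hu v hv huS hvS hut hvt
              have huB : u ∉ B := (Finset.mem_sdiff.mp huS).2
              have hvB : v ∈ B := by
                by_contra hvB
                exact hvS (Finset.mem_sdiff.mpr ⟨hv, hvB⟩)
              exact crossAB' u hu v hv hut hvt (Or.inr ⟨huB, hvB⟩)

/-- If `u` is not a leaf of `t`, the filtered cluster sum over `t` vanishes. -/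
lemma chain_zero {t : HCTree V} {u v : V} {m : ℕ}
    (h : u ∉ t.leafFinset ∨ v ∉ t.leafFinset) :
    (t.internalClusters.map
      (fun H => if u ∈ H ∧ v ∈ H ∧ H.card ≤ m then H.card else 0)).sum = 0 := by
  apply List.sum_eq_zero
  intro x hx
  obtain ⟨H, hH, rfl⟩ := List.mem_map.mp hx
  have hsub := cluster_subset hH
  rw [if_neg]
  rintro ⟨h1, h2, -⟩
  rcases h with h | h
  · exact h (hsub h1)
  · exact h (hsub h2)

/-- The chain lemma: in a 1/3-balanced tree, the total size of clusters of size at most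
`m` containing two given leaves is at most `3·min m (leafCount)`. -/
lemma chain (u v : V) :
    ∀ t : HCTree V, t.leaves.Nodup → t.IsBalanced → ∀ m : ℕ,
    (t.internalClusters.map
      (fun H => if u ∈ H ∧ v ∈ H ∧ H.card ≤ m then H.card else 0)).sum
      ≤ 3 * min m t.leafCount := by
  intro t
  induction t with
  | leaf a => intro _ _ m; simp [internalClusters]
  | node l r ihl ihr =>
    intro hnd hbal m
    obtain ⟨hndl, hndr, hdisj⟩ := nodup_node hnd
    obtain ⟨hb1, hb2, hball, hbalr⟩ := hbal
    have hdF := disjoint_leafFinset hdisj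
    have hcard0 : (l.leafFinset ∪ r.leafFinset).card = l.leafCount + r.leafCount := by
      rw [Finset.card_union_of_disjoint hdF, card_leafFinset hndl, card_leafFinset hndr]
    have hsuml := ihl hndl hball m
    have hsumr := ihr hndr hbalr m
    have hzero : (l.internalClusters.map
        (fun H => if u ∈ H ∧ v ∈ H ∧ H.card ≤ m then H.card else 0)).sum = 0 ∨
        (r.internalClusters.map
        (fun H => if u ∈ H ∧ v ∈ H ∧ H.card ≤ m then H.card else 0)).sum = 0 := by
      by_cases hu : u ∈ l.leafFinset
      · exact Or.inr (chain_zero (Or.inl (Finset.disjoint_left.mp hdF hu)))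
      · exact Or.inl (chain_zero (Or.inl hu))
    have hroot : (if u ∈ l.leafFinset ∪ r.leafFinset ∧ v ∈ l.leafFinset ∪ r.leafFinset ∧
        (l.leafFinset ∪ r.leafFinset).card ≤ m then (l.leafFinset ∪ r.leafFinset).card
        else 0) = 0 ∨
        ((if u ∈ l.leafFinset ∪ r.leafFinset ∧ v ∈ l.leafFinset ∪ r.leafFinset ∧
        (l.leafFinset ∪ r.leafFinset).card ≤ m then (l.leafFinset ∪ r.leafFinset).card
        else 0) = l.leafCount + r.leafCount ∧ l.leafCount + r.leafCount ≤ m) := by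
      split_ifs with h
      · exact Or.inr ⟨hcard0, hcard0 ▸ h.2.2⟩
      · exact Or.inl rfl
    simp only [internalClusters, List.map_cons, List.sum_cons, List.map_append,
      List.sum_append, leafFinset] at *
    simp only [leafCount]
    split_ifs at hroot ⊢ <;> omega

lemma leafFinset_eq_univ {n : ℕ} {t : HCTree (Fin n)} (h : t.IsHCTree) :
    t.leafFinset = Finset.univ :=
  Finset.eq_univ_iff_forall.mpr fun v => mem_leafFinset.mpr (h.2 v)

end HCTree

/-- Swapping a list sum with a finset sum. -/
lemma list_finset_swap {α β : Type*} (L : List α) (s : Finset β) (f : α → β → ℝ) :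
    (L.map fun a => ∑ b ∈ s, f a b).sum = ∑ b ∈ s, (L.map fun a => f a b).sum := by
  induction L with
  | nil => simp
  | cons a L ih => simp [ih, Finset.sum_add_distrib]

/-- The key deterministic bound: the balanced-cut sum of `T` is at most `18` times the
Dasgupta cost of any valid HC tree `T'`. -/
lemma main_bound (n : ℕ) (E : Finset (Fin n × Fin n)) (w : Fin n × Fin n → ℝ)
    (hw : ∀ e ∈ E, 0 ≤ w e) (T : HCTree (Fin n)) (hT : T.IsHCTree)
    (hbal : T.IsBalanced)
    (Smin : Finset (Fin n) → Finset (Fin n))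
    (hopt : ∀ H ∈ T.internalClusters, ∀ S ⊆ H,
      H.card ≤ 3 * S.card → 2 * S.card ≤ H.card →
      cutWeight E w (Smin H) (H \ Smin H) ≤ cutWeight E w S (H \ S))
    (T' : HCTree (Fin n)) (hT' : T'.IsHCTree) :
    (T.internalClusters.map
      (fun H => 2 * cutWeight E w (Smin H) (H \ Smin H) * (H.card : ℝ))).sum ≤
      18 * cost E w T' := by
  classical
  have hLf' : T'.leafFinset = Finset.univ := HCTree.leafFinset_eq_univ hT'
  -- the per-cluster upper bound
  set g : Finset (Fin n) → ℝ := fun H =>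
    ∑ e ∈ E, (if e.1 ∈ H ∧ e.2 ∈ H ∧ H.card ≤ 3 * T'.lcaSize e.1 e.2
      then 2 * (H.card : ℝ) * w e else 0) with hg
  have step1 : ∀ H ∈ T.internalClusters,
      2 * cutWeight E w (Smin H) (H \ Smin H) * (H.card : ℝ) ≤ g H := by
    intro H hH
    have h2 : 2 ≤ H.card := HCTree.cluster_card_ge_two hT.1 hH
    obtain ⟨S, hSH, h3S, h2S, -, hcross⟩ := HCTree.extract H h2 T' hT'.1
      (by rw [hLf', Finset.inter_univ]; omega)
    have hmin : cutWeight E w (Smin H) (H \ Smin H) ≤ cutWeight E w S (H \ S) :=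
      hopt H hH S hSH h3S h2S
    have hcut : cutWeight E w S (H \ S) ≤
        ∑ e ∈ E.filter (fun e => e.1 ∈ H ∧ e.2 ∈ H ∧
          H.card ≤ 3 * T'.lcaSize e.1 e.2), w e := by
      unfold cutWeight
      apply Finset.sum_le_sum_of_subset_of_nonneg
      · intro e he
        obtain ⟨heE, hecross⟩ := Finset.mem_filter.mp he
        refine Finset.mem_filter.mpr ⟨heE, ?_⟩
        rcases hecross with ⟨h1, h2'⟩ | ⟨h1, h2'⟩
        · obtain ⟨h2H, h2S'⟩ := Finset.mem_sdiff.mp h2'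
          exact ⟨hSH h1, h2H, hcross e.1 (hSH h1) e.2 h2H h1 h2S'
            (by rw [hLf']; exact Finset.mem_univ _)
            (by rw [hLf']; exact Finset.mem_univ _)⟩
        · obtain ⟨h1H, h1S'⟩ := Finset.mem_sdiff.mp h1
          refine ⟨h1H, hSH h2', ?_⟩
          rw [HCTree.lcaSize_comm]
          exact hcross e.2 (hSH h2') e.1 h1H h2' h1S'
            (by rw [hLf']; exact Finset.mem_univ _)
            (by rw [hLf']; exact Finset.mem_univ _)
      · intro e he _
        exact hw e (Finset.mem_filter.mp he).1
    have hcw : cutWeight E w (Smin H) (H \ Smin H) ≤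
        ∑ e ∈ E.filter (fun e => e.1 ∈ H ∧ e.2 ∈ H ∧
          H.card ≤ 3 * T'.lcaSize e.1 e.2), w e := le_trans hmin hcut
    have hHpos : (0 : ℝ) ≤ 2 * (H.card : ℝ) := by positivity
    calc 2 * cutWeight E w (Smin H) (H \ Smin H) * (H.card : ℝ)
        = 2 * (H.card : ℝ) * cutWeight E w (Smin H) (H \ Smin H) := by ring
      _ ≤ 2 * (H.card : ℝ) * ∑ e ∈ E.filter (fun e => e.1 ∈ H ∧ e.2 ∈ H ∧
            H.card ≤ 3 * T'.lcaSize e.1 e.2), w e :=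
          mul_le_mul_of_nonneg_left hcw hHpos
      _ = g H := by
          rw [hg, Finset.sum_filter, Finset.mul_sum]
          congr 1
          ext e
          split_ifs <;> ring
  have step2 : (T.internalClusters.map
      (fun H => 2 * cutWeight E w (Smin H) (H \ Smin H) * (H.card : ℝ))).sum ≤
      (T.internalClusters.map g).sum :=
    List.sum_le_sum step1
  -- swap the sums
  rw [show (T.internalClusters.map g).sum = ∑ e ∈ E, (T.internalClusters.map
      (fun H => if e.1 ∈ H ∧ e.2 ∈ H ∧ H.card ≤ 3 * T'.lcaSize e.1 e.2
        then 2 * (H.card : ℝ) * w e else 0)).sum from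
    list_finset_swap _ _ _] at step2
  refine le_trans step2 ?_
  -- bound each per-edge sum using the chain lemma
  have step3 : ∀ e ∈ E, (T.internalClusters.map
      (fun H => if e.1 ∈ H ∧ e.2 ∈ H ∧ H.card ≤ 3 * T'.lcaSize e.1 e.2
        then 2 * (H.card : ℝ) * w e else 0)).sum ≤
      18 * w e * (T'.lcaSize e.1 e.2 : ℝ) := by
    intro e he
    have hchain := HCTree.chain e.1 e.2 T hT.1 hbal (3 * T'.lcaSize e.1 e.2)
    set m := 3 * T'.lcaSize e.1 e.2 with hm
    have hcast : (T.internalClusters.map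
        (fun H => if e.1 ∈ H ∧ e.2 ∈ H ∧ H.card ≤ m then 2 * (H.card : ℝ) * w e
          else 0)).sum = 2 * w e * ((T.internalClusters.map
        (fun H => if e.1 ∈ H ∧ e.2 ∈ H ∧ H.card ≤ m then H.card else 0)).sum : ℕ) := by
      induction T.internalClusters with
      | nil => simp
      | cons H L ih =>
        simp only [List.map_cons, List.sum_cons, ih]
        split_ifs with h
        · push_cast
          ring
        · push_cast
          ring
    rw [hcast]
    have hnat : (T.internalClusters.map
        (fun H => if e.1 ∈ H ∧ e.2 ∈ H ∧ H.card ≤ m then H.card else 0)).sum ≤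
        9 * T'.lcaSize e.1 e.2 := by
      refine hchain.trans ?_
      have := min_le_left m T.leafCount
      omega
    have hwe : (0 : ℝ) ≤ 2 * w e := mul_nonneg (by norm_num) (hw e he)
    refine le_trans (mul_le_mul_of_nonneg_left (Nat.cast_le.mpr hnat) hwe)
      (le_of_eq ?_)
    push_cast
    ring
  refine le_trans (Finset.sum_le_sum step3) ?_
  rw [cost, Finset.mul_sum]
  apply le_of_eq
  apply Finset.sum_congr rfl
  intro e _
  ring

/-- For a 1/3-balanced HC tree `T` of a nonnegatively weighted graph
`G`, with `S^min_H` a minimum-weight 1/3-balanced cut of the induced subgraph `G[H]` for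
each internal cluster `H`, the sum `Σ_H 2·w(S^min_H, H∖S^min_H)·|H|` is at most
`18·OPT_G`. -/
theorem statement_11 (n : ℕ) (E : Finset (Fin n × Fin n)) (w : Fin n × Fin n → ℝ)
    (hw : ∀ e ∈ E, 0 ≤ w e) (T : HCTree (Fin n)) (hT : T.IsHCTree)
    (hbal : T.IsBalanced)
    (Smin : Finset (Fin n) → Finset (Fin n))
    (hsub : ∀ H ∈ T.internalClusters, Smin H ⊆ H)
    (hball : ∀ H ∈ T.internalClusters,
      H.card ≤ 3 * (Smin H).card ∧ 2 * (Smin H).card ≤ H.card)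
    (hopt : ∀ H ∈ T.internalClusters, ∀ S ⊆ H,
      H.card ≤ 3 * S.card → 2 * S.card ≤ H.card →
      cutWeight E w (Smin H) (H \ Smin H) ≤ cutWeight E w S (H \ S)) :
    (T.internalClusters.map
      (fun H => 2 * cutWeight E w (Smin H) (H \ Smin H) * (H.card : ℝ))).sum ≤
      18 * OPT E w := by
  set c := (T.internalClusters.map
    (fun H => 2 * cutWeight E w (Smin H) (H \ Smin H) * (H.card : ℝ))).sum with hc
  have hne : {x | ∃ T' : HCTree (Fin n), T'.IsHCTree ∧ x = cost E w T'}.Nonempty :=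
    ⟨cost E w T, T, hT, rfl⟩
  have hlb : ∀ x ∈ {x | ∃ T' : HCTree (Fin n), T'.IsHCTree ∧ x = cost E w T'},
      c / 18 ≤ x := by
    rintro x ⟨T', hT', rfl⟩
    have := main_bound n E w hw T hT hbal Smin hopt T' hT'
    rw [← hc] at this
    linarith
  have hsInf : c / 18 ≤ OPT E w := le_csInf hne hlb
  linarith

end DPHC
end

section
/- Let G = (V,E,w) be a weighted graph with nonnegative weights, let T* be any HC tree of G, let H ⊆ V with h := |H| ≥ 2, let S^min ⊆ H be a cut of the induced subgraph G[H] of minimum weight w(S^min, H∖S^min) among cuts S ⊆ H with h/3 ≤ |S| ≤ h/2, and let (S₁, S₂) be any partition of H with min(|S₁|, |S₂|) ≥ h/3 and |S₁| ≥ |S₂|. Then h·w(S^min, H∖S^min) ≤ 3·|S₁|·Σ_{(u,v)∈E, u∈H, v∈H} footprint_{T*}^{⌊2h/3⌋}(u,v). -/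
open MeasureTheory Real

namespace DPHC

open HCTree

section Aux

open HCTree

lemma aux_leaves_length {V : Type} (T : HCTree V) : (leaves T).length = leafCount T := by
  induction T with
  | leaf v => rfl
  | node l r ihl ihr => simp [leaves, leafCount, ihl, ihr]

lemma aux_mem_maxCluster {V : Type} [DecidableEq V] (t : ℕ) (T : HCTree V) (u : V)
    (hu : u ∈ leaves T) : u ∈ maxCluster t T u := by
  induction T with
  | leaf a =>
    simp only [leaves, List.mem_singleton] at hu
    simp [maxCluster, hu]
  | node l r ihl ihr =>
    simp only [leaves, List.mem_append] at hu
    unfold maxCluster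
    split
    · simp only [Finset.mem_union, leafFinset, List.mem_toFinset]
      tauto
    · by_cases hl : u ∈ leaves l
      · rw [if_pos hl]; exact ihl hl
      · rw [if_neg hl]; exact ihr (hu.resolve_left hl)

lemma aux_card_maxCluster_le {V : Type} [DecidableEq V] (t : ℕ) (ht : 1 ≤ t)
    (T : HCTree V) (u : V) : (maxCluster t T u).card ≤ t := by
  induction T with
  | leaf a => simpa [maxCluster] using ht
  | node l r ihl ihr =>
    unfold maxCluster
    split
    · refine le_trans (Finset.card_union_le _ _) (le_trans ?_ ‹_›)
      have h1 : (leafFinset l).card ≤ l.leafCount := by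
        rw [← aux_leaves_length]; exact List.toFinset_card_le _
      have h2 : (leafFinset r).card ≤ r.leafCount := by
        rw [← aux_leaves_length]; exact List.toFinset_card_le _
      omega
    · split
      · exact ihl
      · exact ihr

lemma aux_greedy {ι : Type*} [DecidableEq ι] (f : ι → ℕ) (q : ℕ) (hq : 1 ≤ q)
    (K : Finset ι) (hsmall : ∀ k ∈ K, 3 * f k < q) (hsum : q ≤ 3 * ∑ k ∈ K, f k) :
    ∃ K' ⊆ K, q ≤ 3 * ∑ k ∈ K', f k ∧ 3 * ∑ k ∈ K', f k < 2 * q := by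
  induction K using Finset.induction_on with
  | empty => simp at hsum; omega
  | @insert a K ha ih =>
    rw [Finset.sum_insert ha] at hsum
    by_cases hK : q ≤ 3 * ∑ k ∈ K, f k
    · obtain ⟨K', hK'sub, h1, h2⟩ :=
        ih (fun k hk => hsmall k (Finset.mem_insert_of_mem hk)) hK
      exact ⟨K', hK'sub.trans (Finset.subset_insert _ _), h1, h2⟩
    · refine ⟨insert a K, subset_rfl, ?_, ?_⟩ <;>
        rw [Finset.sum_insert ha] <;>
        [omega; skip]
      have := hsmall a (Finset.mem_insert_self a K)
      omega

end Aux

/-- Charging a balanced min-cut of an induced subgraph `G[H]` to the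
cost footprints of an arbitrary HC tree `T*` at scale `⌊2h/3⌋`:
`h·w(S^min, H∖S^min) ≤ 3·|S₁|·Σ_{(u,v)∈E, u,v∈H} footprint_{T*}^{⌊2h/3⌋}(u,v)`. -/
theorem statement_13 (n : ℕ) (E : Finset (Fin n × Fin n)) (w : Fin n × Fin n → ℝ)
    (hw : ∀ e ∈ E, 0 ≤ w e) (Tstar : HCTree (Fin n)) (hT : Tstar.IsHCTree)
    (H : Finset (Fin n)) (hH : 2 ≤ H.card)
    (Smin : Finset (Fin n)) (hsub : Smin ⊆ H)
    (hbal : H.card ≤ 3 * Smin.card ∧ 2 * Smin.card ≤ H.card)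
    (hopt : ∀ S ⊆ H, H.card ≤ 3 * S.card → 2 * S.card ≤ H.card →
      cutWeight E w Smin (H \ Smin) ≤ cutWeight E w S (H \ S))
    (S₁ S₂ : Finset (Fin n)) (hdisj : Disjoint S₁ S₂) (hunion : S₁ ∪ S₂ = H)
    (hb1 : H.card ≤ 3 * S₁.card) (hb2 : H.card ≤ 3 * S₂.card)
    (hord : S₂.card ≤ S₁.card) :
    (H.card : ℝ) * cutWeight E w Smin (H \ Smin) ≤
      3 * S₁.card *
        ∑ e ∈ E.filter (fun e => e.1 ∈ H ∧ e.2 ∈ H),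
          footprint w (2 * H.card / 3) Tstar e.1 e.2 := by
  set t := 2 * H.card / 3 with ht_def
  set c : Fin n → Finset (Fin n) := fun v => Tstar.maxCluster t v with hc
  have ht1 : 1 ≤ t := by
    rw [ht_def, Nat.le_div_iff_mul_le (by norm_num)]; omega
  have ht2 : 3 * t ≤ 2 * H.card := by
    have := Nat.div_mul_le_self (2 * H.card) 3
    omega
  have hmem : ∀ v, v ∈ c v := fun v => aux_mem_maxCluster t Tstar v (hT.2 v)
  have hcard : ∀ v, (c v).card ≤ t := fun v => aux_card_maxCluster_le t ht1 Tstar v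
  -- Step 1: a union-of-clusters cut of H with size in [h/3, 2h/3]
  obtain ⟨S, hSsub, hS1, hS2, hSsat⟩ :
      ∃ S : Finset (Fin n), S ⊆ H ∧ H.card ≤ 3 * S.card ∧ 3 * S.card ≤ 2 * H.card ∧
        ∀ u ∈ S, ∀ v ∈ H, v ∉ S → c u ≠ c v := by
    by_cases hbig : ∃ u ∈ H, H.card ≤ 3 * (H.filter (fun v => c v = c u)).card
    · obtain ⟨u, hu, hbig⟩ := hbig
      refine ⟨H.filter (fun v => c v = c u), Finset.filter_subset _ _, hbig, ?_, ?_⟩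
      · have hsub2 : H.filter (fun v => c v = c u) ⊆ c u := by
          intro v hv
          simp only [Finset.mem_filter] at hv
          exact hv.2 ▸ hmem v
        have h1 := Finset.card_le_card hsub2
        have h2 := hcard u
        omega
      · intro x hx v hv hvn heq
        simp only [Finset.mem_filter] at hx
        exact hvn (Finset.mem_filter.mpr ⟨hv, heq.symm.trans hx.2⟩)
    · push_neg at hbig
      have hfib : H.card = ∑ k ∈ H.image c, (H.filter (fun v => c v = k)).card :=
        Finset.card_eq_sum_card_fiberwise (fun x hx => Finset.mem_image_of_mem c hx)
      obtain ⟨K', hK'sub, h1, h2⟩ :=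
        aux_greedy (fun k => (H.filter (fun v => c v = k)).card) H.card (by omega)
          (H.image c)
          (by
            intro k hk
            obtain ⟨u, hu, rfl⟩ := Finset.mem_image.mp hk
            exact hbig u hu)
          (by
            show H.card ≤ 3 * ∑ k ∈ H.image c, (H.filter (fun v => c v = k)).card
            omega)
      have hScard : (H.filter (fun v => c v ∈ K')).card
          = ∑ k ∈ K', (H.filter (fun v => c v = k)).card := by
        rw [Finset.card_eq_sum_card_fiberwise
          (s := H.filter fun v => c v ∈ K') (t := K') (f := c)
          (fun x hx => (Finset.mem_filter.mp hx).2)]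
        refine Finset.sum_congr rfl fun k hk => ?_
        congr 1
        ext v
        simp only [Finset.mem_filter]
        constructor
        · rintro ⟨⟨hvH, _⟩, hvk⟩; exact ⟨hvH, hvk⟩
        · rintro ⟨hvH, hvk⟩; exact ⟨⟨hvH, hvk ▸ hk⟩, hvk⟩
      have h1' : H.card ≤ 3 * (H.filter (fun v => c v ∈ K')).card := by
        rw [hScard]; exact h1
      have h2' : 3 * (H.filter (fun v => c v ∈ K')).card < 2 * H.card := by
        rw [hScard]; exact h2
      refine ⟨H.filter (fun v => c v ∈ K'), Finset.filter_subset _ _, ?_, ?_, ?_⟩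
      · exact h1'
      · omega
      · intro x hx v hv hvn heq
        simp only [Finset.mem_filter] at hx
        exact hvn (Finset.mem_filter.mpr ⟨hv, heq ▸ hx.2⟩)
  -- Step 2: replace S by the smaller side of the cut
  have hScardle := Finset.card_le_card hSsub
  obtain ⟨S', hS'sub, hS'1, hS'2, hS'sat⟩ :
      ∃ S' : Finset (Fin n), S' ⊆ H ∧ H.card ≤ 3 * S'.card ∧ 2 * S'.card ≤ H.card ∧
        ∀ u ∈ S', ∀ v ∈ H, v ∉ S' → c u ≠ c v := by
    by_cases hhalf : 2 * S.card ≤ H.card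
    · exact ⟨S, hSsub, hS1, hhalf, hSsat⟩
    · refine ⟨H \ S, Finset.sdiff_subset, ?_, ?_, ?_⟩
      · rw [Finset.card_sdiff_of_subset hSsub]; omega
      · rw [Finset.card_sdiff_of_subset hSsub]; omega
      · intro u hu v hv hvn heq
        have hvS : v ∈ S := by
          by_contra hvS
          exact hvn (Finset.mem_sdiff.mpr ⟨hv, hvS⟩)
        have huH : u ∈ H := (Finset.mem_sdiff.mp hu).1
        have huS : u ∉ S := (Finset.mem_sdiff.mp hu).2
        exact hSsat v hvS u huH huS heq.symm
  -- Step 3: the cut weight of S' is bounded by the total footprint on H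
  set F := E.filter (fun e => e.1 ∈ H ∧ e.2 ∈ H) with hF
  have hcut : cutWeight E w S' (H \ S') ≤ ∑ e ∈ F, footprint w t Tstar e.1 e.2 := by
    have e1 : cutWeight E w S' (H \ S')
        = ∑ e ∈ E.filter (fun e => (e.1 ∈ S' ∧ e.2 ∈ H \ S') ∨ (e.1 ∈ H \ S' ∧ e.2 ∈ S')),
            footprint w t Tstar e.1 e.2 := by
      unfold cutWeight
      refine Finset.sum_congr rfl fun e he => ?_
      simp only [Finset.mem_filter, Finset.mem_sdiff] at he
      have hne : c e.1 ≠ c e.2 := by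
        rcases he.2 with ⟨h1, h2⟩ | ⟨h1, h2⟩
        · exact hS'sat e.1 h1 e.2 h2.1 h2.2
        · exact fun heq => hS'sat e.2 h2 e.1 h1.1 h1.2 heq.symm
      simp only [hc] at hne
      rw [footprint, if_pos hne]
    rw [e1]
    refine Finset.sum_le_sum_of_subset_of_nonneg ?_ fun e he _ => ?_
    · intro e he
      simp only [Finset.mem_filter, Finset.mem_sdiff, hF] at he ⊢
      refine ⟨he.1, ?_⟩
      rcases he.2 with ⟨h1, h2⟩ | ⟨h1, h2⟩
      · exact ⟨hS'sub h1, h2.1⟩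
      · exact ⟨h1.1, hS'sub h2⟩
    · rw [footprint]
      split
      · exact hw _ (Finset.mem_filter.mp he).1
      · exact le_refl 0
  -- Step 4: put everything together
  have hmin := hopt S' hS'sub hS'1 hS'2
  have hFnonneg : 0 ≤ ∑ e ∈ F, footprint w t Tstar e.1 e.2 := by
    refine Finset.sum_nonneg fun e he => ?_
    rw [footprint]
    split
    · exact hw _ (Finset.mem_filter.mp he).1
    · exact le_refl 0
  have key : cutWeight E w Smin (H \ Smin) ≤ ∑ e ∈ F, footprint w t Tstar e.1 e.2 :=
    hmin.trans hcut
  calc (H.card : ℝ) * cutWeight E w Smin (H \ Smin)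
      ≤ (H.card : ℝ) * ∑ e ∈ F, footprint w t Tstar e.1 e.2 :=
        mul_le_mul_of_nonneg_left key (by positivity)
    _ ≤ 3 * S₁.card * ∑ e ∈ F, footprint w t Tstar e.1 e.2 := by
        refine mul_le_mul_of_nonneg_right ?_ hFnonneg
        exact_mod_cast hb1

end DPHC
end
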